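/- arXiv:1606.04151 — 10 statements merged into one kernel-verified Lean document; each statement's English description precedes it below -/
import Mathlib

section
/- Let t > 0 and let H(s), for s ∈ (0,t), be a family of bounded operators on a complex Hilbert space E such that each H(s) is self-adjoint and positive (⟨H(s)x, x⟩ ≥ 0 for all x ∈ E), the operators pairwise commute (H(s₁)H(s₂) = H(s₂)H(s₁) for all s₁, s₂ ∈ (0,t)), s ↦ H(s) is Bochner integrable on (0,t), and let g : (0,t) → E be strongly measurable with s ↦ H(s)g(s) Bochner integrable and s ↦ ⟨H(s)g(s), g(s)⟩ integrable. Then ‖∫₀ᵗ H(s) g(s) ds‖² ≤ ‖∫₀ᵗ H(s) ds‖ · ∫₀ᵗ ⟨H(s) g(s), g(s)⟩ ds. -/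
/-!
Fix `u := ∫ H g`. For every real `r`, positivity of `H s` at the vector `r • g s - u` gives
`2 r re⟪H s (g s), u⟫ ≤ r² re⟪H s (g s), g s⟫ + re⟪H s u, u⟫`. Integrating, the quadratic
`r² ∫ re⟪H g, g⟫ - 2 r ‖u‖² + re⟪(∫ H) u, u⟫` is nonnegative on `ℝ`, so its discriminant is
nonpositive: `‖u‖⁴ ≤ (∫ re⟪H g, g⟫) · re⟪(∫ H) u, u⟫ ≤ (∫ re⟪H g, g⟫) · ‖∫ H‖ · ‖u‖²`.
-/

open MeasureTheory

namespace ContinuousLinearMap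

variable {𝕜 E : Type*} [RCLike 𝕜] [NormedAddCommGroup E] [InnerProductSpace 𝕜 E]

open RCLike in
theorem IsPositive.two_mul_re_inner_le {T : E →L[𝕜] E} (hT : T.IsPositive) (x y : E) (r : ℝ) :
    2 * r * re (inner 𝕜 (T x) y) ≤ r ^ 2 * re (inner 𝕜 (T x) x) + re (inner 𝕜 (T y) y) := by
  have hnonneg := hT.re_inner_nonneg_left ((r : 𝕜) • x - y)
  have hsymm : re (inner 𝕜 (T y) x) = re (inner 𝕜 (T x) y) := by
    rw [hT.inner_left_eq_inner_right, inner_re_symm]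
  simp only [map_sub, map_smul, inner_sub_left, inner_sub_right, inner_smul_left,
    inner_smul_right, conj_ofReal, re_ofReal_mul, hsymm] at hnonneg
  linear_combination hnonneg

end ContinuousLinearMap

section

variable {α E : Type*} [MeasurableSpace α] {μ : Measure α}
  [NormedAddCommGroup E] [InnerProductSpace ℂ E] [CompleteSpace E]

theorem integral_re_inner_const {F : α → E} (hF : Integrable F μ) (v : E) :
    ∫ a, (inner ℂ (F a) v).re ∂μ = (inner ℂ (∫ a, F a ∂μ) v).re := by
  calc ∫ a, (inner ℂ (F a) v).re ∂μ = (∫ a, inner ℂ (F a) v ∂μ).re :=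
      integral_re (𝕜 := ℂ) (hF.inner_const v)
    _ = (inner ℂ (∫ a, F a ∂μ) v).re := by
      simp_rw [← inner_conj_symm _ v, integral_conj, integral_inner hF]

theorem integral_two_mul_re_inner_le {H : α → E →L[ℂ] E} {g : α → E}
    (hpos : ∀ᵐ a ∂μ, (H a).IsPositive) (hH : Integrable H μ)
    (hHg : Integrable (fun a => H a (g a)) μ)
    (hf : Integrable (fun a => (inner ℂ (H a (g a)) (g a)).re) μ) (v : E) (r : ℝ) :
    2 * r * (inner ℂ (∫ a, H a (g a) ∂μ) v).re ≤
      r ^ 2 * ∫ a, (inner ℂ (H a (g a)) (g a)).re ∂μ + (inner ℂ ((∫ a, H a ∂μ) v) v).re := by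
  have hHv : Integrable (fun a => H a v) μ := hH.apply_continuousLinearMap v
  rw [← integral_re_inner_const hHg, ← integral_const_mul, ContinuousLinearMap.integral_apply hH,
    ← integral_re_inner_const hHv, ← integral_const_mul, ← integral_add]
  · refine integral_mono_ae ?_ ?_ ?_
    · exact (hHg.inner_const (𝕜 := ℂ) v).re.const_mul (2 * r)
    · exact (hf.const_mul _).add (hHv.inner_const (𝕜 := ℂ) v).re
    · filter_upwards [hpos] with a ha
      exact ha.two_mul_re_inner_le (g a) v r
  · exact hf.const_mul _
  · exact (hHv.inner_const (𝕜 := ℂ) v).re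

theorem re_inner_integral_sq_le {H : α → E →L[ℂ] E} {g : α → E}
    (hpos : ∀ᵐ a ∂μ, (H a).IsPositive) (hH : Integrable H μ)
    (hHg : Integrable (fun a => H a (g a)) μ)
    (hf : Integrable (fun a => (inner ℂ (H a (g a)) (g a)).re) μ) (v : E) :
    (inner ℂ (∫ a, H a (g a) ∂μ) v).re ^ 2 ≤
      (∫ a, (inner ℂ (H a (g a)) (g a)).re ∂μ) * (inner ℂ ((∫ a, H a ∂μ) v) v).re := by
  have hdiscrim := discrim_le_zero (a := ∫ a, (inner ℂ (H a (g a)) (g a)).re ∂μ)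
    (b := -2 * (inner ℂ (∫ a, H a (g a) ∂μ) v).re) (c := (inner ℂ ((∫ a, H a ∂μ) v) v).re)
    fun r => by linarith [integral_two_mul_re_inner_le hpos hH hHg hf v r]
  rw [discrim] at hdiscrim
  linarith

end

theorem schwarz_like_inequality_general
    {E : Type*} [NormedAddCommGroup E] [InnerProductSpace ℂ E] [CompleteSpace E]
    (t : ℝ) (H : ℝ → (E →L[ℂ] E)) (g : ℝ → E)
    (hsa : ∀ s ∈ Set.Ioo (0:ℝ) t, IsSelfAdjoint (H s))
    (hpos : ∀ s ∈ Set.Ioo (0:ℝ) t, ∀ x : E, 0 ≤ (inner ℂ ((H s) x) x : ℂ).re)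
    (hHint : IntegrableOn H (Set.Ioo 0 t))
    (hHg : IntegrableOn (fun s => (H s) (g s)) (Set.Ioo 0 t))
    (hinner : IntegrableOn (fun s => (inner ℂ ((H s) (g s)) (g s) : ℂ).re) (Set.Ioo 0 t)) :
    ‖∫ s in Set.Ioo (0:ℝ) t, (H s) (g s)‖ ^ 2 ≤
      ‖∫ s in Set.Ioo (0:ℝ) t, H s‖ *
        ∫ s in Set.Ioo (0:ℝ) t, (inner ℂ ((H s) (g s)) (g s) : ℂ).re := by
  have hHpos : ∀ᵐ s ∂volume.restrict (Set.Ioo 0 t), (H s).IsPositive :=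
    ae_restrict_of_forall_mem measurableSet_Ioo fun s hs =>
      (H s).isPositive_def'.2 ⟨hsa s hs, hpos s hs⟩
  set u := ∫ s in Set.Ioo (0:ℝ) t, (H s) (g s)
  set A := ∫ s in Set.Ioo (0:ℝ) t, H s
  set F := ∫ s in Set.Ioo (0:ℝ) t, (inner ℂ ((H s) (g s)) (g s) : ℂ).re
  have hF : 0 ≤ F :=
    integral_nonneg_of_ae (hHpos.mono fun s hs => hs.re_inner_nonneg_left (g s))
  have hAu : (inner ℂ (A u) u).re ≤ ‖A‖ * ‖u‖ ^ 2 :=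
    calc (inner ℂ (A u) u).re ≤ ‖A u‖ * ‖u‖ := re_inner_le_norm (𝕜 := ℂ) _ _
      _ ≤ ‖A‖ * ‖u‖ ^ 2 := by nlinarith [A.le_opNorm u, norm_nonneg u]
  have hcs : (inner ℂ u u).re ^ 2 ≤ F * (inner ℂ (A u) u).re :=
    re_inner_integral_sq_le hHpos hHint hHg hinner u
  have hu : (inner ℂ u u).re = ‖u‖ ^ 2 := inner_self_eq_norm_sq (𝕜 := ℂ) u
  rw [hu] at hcs
  have hquartic : (‖u‖ ^ 2) ^ 2 ≤ (‖A‖ * F) * ‖u‖ ^ 2 :=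
    calc (‖u‖ ^ 2) ^ 2 ≤ F * (‖A‖ * ‖u‖ ^ 2) := hcs.trans (mul_le_mul_of_nonneg_left hAu hF)
      _ = (‖A‖ * F) * ‖u‖ ^ 2 := by ring
  nlinarith [mul_nonneg (norm_nonneg A) hF, sq_nonneg ‖u‖]

/-- **Schwarz-like inequality** (Lemma 5.11): for a commuting family of bounded, positive,
self-adjoint operators `H s` on a complex Hilbert space `E` and a strongly measurable
`g : (0,t) → E`,
`‖∫₀ᵗ H(s) g(s) ds‖² ≤ ‖∫₀ᵗ H(s) ds‖ · ∫₀ᵗ ⟨H(s) g(s), g(s)⟩ ds`. -/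
theorem schwarz_like_inequality
    {E : Type*} [NormedAddCommGroup E] [InnerProductSpace ℂ E] [CompleteSpace E]
    (t : ℝ) (ht : 0 < t) (H : ℝ → (E →L[ℂ] E)) (g : ℝ → E)
    (hsa : ∀ s ∈ Set.Ioo (0:ℝ) t, IsSelfAdjoint (H s))
    (hpos : ∀ s ∈ Set.Ioo (0:ℝ) t, ∀ x : E, 0 ≤ (inner ℂ ((H s) x) x : ℂ).re)
    (hcomm : ∀ s₁ ∈ Set.Ioo (0:ℝ) t, ∀ s₂ ∈ Set.Ioo (0:ℝ) t, Commute (H s₁) (H s₂))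
    (hHint : IntegrableOn H (Set.Ioo 0 t))
    (hgmeas : AEStronglyMeasurable g (volume.restrict (Set.Ioo 0 t)))
    (hHg : IntegrableOn (fun s => (H s) (g s)) (Set.Ioo 0 t))
    (hinner : IntegrableOn (fun s => (inner ℂ ((H s) (g s)) (g s) : ℂ).re) (Set.Ioo 0 t)) :
    ‖∫ s in Set.Ioo (0:ℝ) t, (H s) (g s)‖ ^ 2 ≤
      ‖∫ s in Set.Ioo (0:ℝ) t, H s‖ *
        ∫ s in Set.Ioo (0:ℝ) t, (inner ℂ ((H s) (g s)) (g s) : ℂ).re :=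
  schwarz_like_inequality_general t H g hsa hpos hHint hHg hinner
end

section
/- Let α, μ be real numbers with 0 ≤ α ≤ 1, 0 ≤ μ < 1 and α + μ ≤ 1. Then for every λ > 0 and every t > 0, ∫₀ᵗ s^{-μ} λ^α e^{-(t-s)λ} ds ≤ t^{1-α-μ} (1-μ)^{α-1}. -/
/-!
For `0 ≤ s ≤ t` we have `s ≤ t^μ s^{1-μ}`, so the kernel `e^{-(t-s)λ}` is dominated by
`e^{-tλ} e^{c s^{1-μ}}` with `c = λ t^μ`, and `s^{-μ} e^{c s^{1-μ}}` has the explicit primitive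
`e^{c s^{1-μ}} / (c (1-μ))`. This bounds the integral by `λ^α (1 - e^{-tλ}) / (λ t^μ (1-μ))`.
The elementary inequality `1 - e^{-x} ≤ α^α x^{1-α}`, which comes from the maximum of
`v^a (1-v)` on `[0,1]` through a monotonicity argument, and `α^α ≤ (1-μ)^α` finish the estimate.
-/

open MeasureTheory Real Set

theorem rpow_mul_one_sub_rpow_le {a b v : ℝ} (ha : 0 < a) (hb : 0 < b) (hv0 : 0 ≤ v)
    (hv1 : v ≤ 1) : v ^ a * (1 - v) ^ b ≤ (a / (a + b)) ^ a * (b / (a + b)) ^ b := by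
  have hab : 0 < a + b := by positivity
  have hv1' : 0 ≤ 1 - v := by linarith
  have amgm := geom_mean_le_arith_mean2_weighted (w₁ := a / (a + b)) (w₂ := b / (a + b))
    (p₁ := v / (a / (a + b))) (p₂ := (1 - v) / (b / (a + b))) (by positivity) (by positivity)
    (by positivity) (by positivity) (by field_simp)
  rw [mul_div_cancel₀ _ (by positivity), mul_div_cancel₀ _ (by positivity), add_sub_cancel]
    at amgm
  have := rpow_le_one (by positivity) amgm hab.le
  rw [mul_rpow (by positivity) (by positivity), ← rpow_mul (by positivity),
    ← rpow_mul (by positivity), div_mul_cancel₀ _ hab.ne', div_mul_cancel₀ _ hab.ne',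
    div_rpow hv0 (by positivity), div_rpow hv1' (by positivity), div_mul_div_comm,
    div_le_one (by positivity)] at this
  linarith

theorem one_sub_exp_neg_rpow_le {a x : ℝ} (ha : 0 < a) (hx : 0 ≤ x) :
    (1 - exp (-x)) ^ (a + 1) ≤ (a / (a + 1)) ^ a * x := by
  set K := (a / (a + 1)) ^ a
  set g : ℝ → ℝ := fun y ↦ K * y - (1 - exp (-y)) ^ (a + 1)
  have hg : ∀ y, HasDerivAt g (K - (a + 1) * exp (-y) * (1 - exp (-y)) ^ a) y := by
    intro y
    refine (((hasDerivAt_id y).const_mul K).sub (((hasDerivAt_neg y).exp.const_sub 1).rpow_const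
      (p := a + 1) (Or.inr (by linarith)))).congr_deriv ?_
    rw [add_sub_cancel_right]
    ring
  -- the derivative is nonnegative because `v ^ a * (1 - v)` is maximal at `v = a / (a + 1)`
  have hmono : MonotoneOn g (Ici 0) := by
    refine monotoneOn_of_hasDerivWithinAt_nonneg (convex_Ici 0)
      (fun y _ ↦ (hg y).continuousAt.continuousWithinAt) (fun y _ ↦ (hg y).hasDerivWithinAt)
      (fun y hy ↦ ?_)
    rw [interior_Ici] at hy
    have hw1 : exp (-y) ≤ 1 := exp_le_one_iff.2 (by linarith [mem_Ioi.1 hy])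
    have hmax := rpow_mul_one_sub_rpow_le ha one_pos (sub_nonneg.2 hw1)
      (by linarith [exp_pos (-y)])
    rw [sub_sub_cancel, rpow_one, rpow_one] at hmax
    rw [sub_nonneg]
    calc (a + 1) * exp (-y) * (1 - exp (-y)) ^ a
        = (a + 1) * ((1 - exp (-y)) ^ a * exp (-y)) := by ring
      _ ≤ (a + 1) * (K * (1 / (a + 1))) := by gcongr
      _ = K := by field_simp
  have := hmono self_mem_Ici hx hx
  simp only [g, neg_zero, exp_zero, sub_self, mul_zero, zero_rpow (by linarith : a + 1 ≠ 0)]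
    at this
  linarith

theorem one_sub_exp_neg_le_rpow_mul_rpow {α x : ℝ} (hα0 : 0 ≤ α) (hα1 : α ≤ 1) (hx : 0 ≤ x) :
    1 - exp (-x) ≤ α ^ α * x ^ (1 - α) := by
  rcases hα0.eq_or_lt with rfl | hα0
  · simpa using add_one_le_exp (-x)
  rcases hα1.eq_or_lt with rfl | hα1
  · simpa using exp_nonneg (-x)
  have h1α : 0 < 1 - α := by linarith
  have hexp : 0 ≤ 1 - exp (-x) := sub_nonneg.2 (exp_le_one_iff.2 (by linarith))
  -- `a = α / (1 - α)` is chosen so that `a / (a + 1) = α`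
  have key := one_sub_exp_neg_rpow_le (a := α / (1 - α)) (by positivity) hx
  have ha1 : α / (1 - α) + 1 = (1 - α)⁻¹ := by field_simp; ring
  have hratio : α / (1 - α) / (1 - α)⁻¹ = α := by field_simp
  rw [ha1, hratio] at key
  calc 1 - exp (-x) = ((1 - exp (-x)) ^ (1 - α)⁻¹) ^ (1 - α) := by
        rw [← rpow_mul hexp, inv_mul_cancel₀ h1α.ne', rpow_one]
    _ ≤ (α ^ (α / (1 - α)) * x) ^ (1 - α) := by gcongr
    _ = α ^ α * x ^ (1 - α) := by
        rw [mul_rpow (by positivity) hx, ← rpow_mul hα0.le, div_mul_cancel₀ _ h1α.ne']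

theorem le_rpow_mul_rpow_one_sub {s t μ : ℝ} (hs : 0 ≤ s) (hst : s ≤ t) (hμ : 0 ≤ μ) :
    s ≤ t ^ μ * s ^ (1 - μ) :=
  calc s = s ^ μ * s ^ (1 - μ) := by rw [← rpow_add' hs (by simp), add_sub_cancel, rpow_one]
    _ ≤ t ^ μ * s ^ (1 - μ) := by gcongr

theorem integral_rpow_neg_mul_exp_mul_rpow {μ c t : ℝ} (hμ : μ < 1) (hc : c ≠ 0) (ht : 0 ≤ t) :
    ∫ s in (0)..t, s ^ (-μ) * exp (c * s ^ (1 - μ)) =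
      (exp (c * t ^ (1 - μ)) - 1) / (c * (1 - μ)) := by
  have h1μ : 1 - μ ≠ 0 := by linarith
  have hcont : Continuous fun s : ℝ ↦ exp (c * s ^ (1 - μ)) := by fun_prop (disch := linarith)
  have hderiv : ∀ s ∈ Ioo 0 t, HasDerivAt (fun s ↦ exp (c * s ^ (1 - μ)) / (c * (1 - μ)))
      (s ^ (-μ) * exp (c * s ^ (1 - μ))) s := by
    intro s hs
    refine ((((hasDerivAt_rpow_const (p := 1 - μ) (Or.inl hs.1.ne')).const_mul c).exp).div_const
      _).congr_deriv ?_
    rw [sub_sub_cancel_left]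
    field_simp
  rw [intervalIntegral.integral_eq_sub_of_hasDerivAt_of_le ht (hcont.div_const _).continuousOn
    hderiv ((intervalIntegral.intervalIntegrable_rpow' (by linarith)).mul_continuousOn
      hcont.continuousOn)]
  rw [zero_rpow h1μ, mul_zero, exp_zero, sub_div]

theorem integral_rpow_neg_mul_exp_le {μ lam t : ℝ} (hμ0 : 0 ≤ μ) (hμ1 : μ < 1) (hlam : 0 < lam)
    (ht : 0 < t) :
    ∫ s in (0)..t, s ^ (-μ) * exp (-(t - s) * lam) ≤
      (1 - exp (-(t * lam))) / (lam * t ^ μ * (1 - μ)) := by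
  set c := lam * t ^ μ
  have hcT : c * t ^ (1 - μ) = t * lam := by
    rw [mul_assoc, ← rpow_add ht, add_sub_cancel, rpow_one, mul_comm]
  have hpt : ∀ s ∈ Icc 0 t, s ^ (-μ) * exp (-(t - s) * lam) ≤
      exp (-(t * lam)) * (s ^ (-μ) * exp (c * s ^ (1 - μ))) := by
    intro s hs
    rw [mul_left_comm, ← exp_add]
    have := le_rpow_mul_rpow_one_sub hs.1 hs.2 hμ0
    refine mul_le_mul_of_nonneg_left (exp_le_exp.2 ?_) (rpow_nonneg hs.1 _)
    nlinarith
  have hint : ∀ f : ℝ → ℝ, Continuous f →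
      IntervalIntegrable (fun s ↦ s ^ (-μ) * f s) volume 0 t := fun f hf ↦
    (intervalIntegral.intervalIntegrable_rpow' (by linarith)).mul_continuousOn hf.continuousOn
  calc ∫ s in (0)..t, s ^ (-μ) * exp (-(t - s) * lam)
      ≤ ∫ s in (0)..t, exp (-(t * lam)) * (s ^ (-μ) * exp (c * s ^ (1 - μ))) :=
        intervalIntegral.integral_mono_on ht.le (hint _ (by fun_prop))
          ((hint _ (by fun_prop (disch := linarith))).const_mul _) hpt
    _ = exp (-(t * lam)) * ((exp (t * lam) - 1) / (c * (1 - μ))) := by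
        rw [intervalIntegral.integral_const_mul,
          integral_rpow_neg_mul_exp_mul_rpow hμ1 (by positivity) ht.le, hcT]
    _ = (1 - exp (-(t * lam))) / (lam * t ^ μ * (1 - μ)) := by
        rw [mul_div_assoc', mul_sub, ← exp_add, neg_add_cancel, exp_zero, mul_one]

/-- Key scalar estimate in the proof of Lemma 5.12: for `0 ≤ α ≤ 1`, `0 ≤ μ < 1`, `α + μ ≤ 1`,
`λ > 0` and `t > 0`, `∫₀ᵗ s^{-μ} λ^α e^{-(t-s)λ} ds ≤ t^{1-α-μ} (1-μ)^{α-1}`. -/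
theorem scalar_estimate_lemma512 (α μ : ℝ) (hα0 : 0 ≤ α) (hα1 : α ≤ 1)
    (hμ0 : 0 ≤ μ) (hμ1 : μ < 1) (hαμ : α + μ ≤ 1)
    (lam t : ℝ) (hlam : 0 < lam) (ht : 0 < t) :
    ∫ s in Set.Ioo (0:ℝ) t, s ^ (-μ) * lam ^ α * Real.exp (-(t - s) * lam) ≤
      t ^ (1 - α - μ) * (1 - μ) ^ (α - 1) := by
  have h1μ : 0 < 1 - μ := by linarith
  calc ∫ s in Ioo 0 t, s ^ (-μ) * lam ^ α * exp (-(t - s) * lam)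
      = lam ^ α * ∫ s in (0)..t, s ^ (-μ) * exp (-(t - s) * lam) := by
        rw [intervalIntegral.integral_of_le ht.le, integral_Ioc_eq_integral_Ioo,
          ← integral_const_mul]
        congr 1 with s
        ring
    _ ≤ lam ^ α * ((1 - exp (-(t * lam))) / (lam * t ^ μ * (1 - μ))) := by
        gcongr
        exact integral_rpow_neg_mul_exp_le hμ0 hμ1 hlam ht
    _ ≤ lam ^ α * (α ^ α * (t * lam) ^ (1 - α) / (lam * t ^ μ * (1 - μ))) := by
        gcongr
        exact one_sub_exp_neg_le_rpow_mul_rpow hα0 hα1 (by positivity)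
    _ = α ^ α * t ^ (1 - α - μ) / (1 - μ) := by
        rw [mul_rpow ht.le hlam.le, rpow_sub ht (1 - α) μ, rpow_sub ht 1 α, rpow_sub hlam 1 α,
          rpow_one, rpow_one]
        field_simp
    _ ≤ (1 - μ) ^ α * t ^ (1 - α - μ) / (1 - μ) := by
        gcongr
        linarith
    _ = t ^ (1 - α - μ) * (1 - μ) ^ (α - 1) := by
        rw [rpow_sub h1μ, rpow_one]
        ring
end

section
/- Let α, μ, b, δ be real numbers with 0 ≤ α ≤ 1, 0 ≤ μ ≤ b < 1 and δ = 1 - α - μ ≥ 0. Then for every λ > 0 and all 0 < s ≤ T < ∞, ∫ₛᵀ t^{δ-b} λ^α e^{-(t-s)λ} dt ≤ s^{μ-b} T^{2δ} C(μ,δ), where C(μ,δ) denotes sup_{τ>0} τ^{-δ} ∫₀^τ σ^{-μ} e^{-σ} dσ. -/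
open MeasureTheory

/-- `C(μ,δ) = sup_{τ>0} τ^{-δ} ∫₀^τ σ^{-μ} e^{-σ} dσ`. -/
noncomputable def Cconst (μ δ : ℝ) : ℝ :=
  sSup ((fun τ : ℝ => τ ^ (-δ) * ∫ σ in Set.Ioo (0:ℝ) τ, σ ^ (-μ) * Real.exp (-σ)) '' Set.Ioi 0)

namespace Lem514

open Set Real

/-- Integrability of `σ ^ (-μ) * exp (-σ * lam)` on `Ioo 0 τ`. -/
lemma integrableOn_aux {μ lam : ℝ} (hμ : μ < 1) (hlam : 0 ≤ lam) (τ : ℝ) :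
    IntegrableOn (fun σ : ℝ => σ ^ (-μ) * Real.exp (-σ * lam)) (Ioo 0 τ) := by
  rcases le_or_gt τ 0 with h | h
  · rw [Set.Ioo_eq_empty (by intro hc; exact absurd (hc.trans_le h) (lt_irrefl 0))]
    exact integrableOn_empty
  · have h1 : IntegrableOn (fun σ : ℝ => σ ^ (-μ)) (Ioo 0 τ) :=
      (intervalIntegral.integrableOn_Ioo_rpow_iff h).2 (by linarith)
    refine h1.mono' ?_ ?_
    · exact h1.aestronglyMeasurable.mul
        ((Real.continuous_exp.comp (by continuity)).aestronglyMeasurable)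
    · filter_upwards [ae_restrict_mem measurableSet_Ioo] with x hx
      have h0 : (0:ℝ) ≤ x ^ (-μ) := Real.rpow_nonneg hx.1.le _
      rw [Real.norm_eq_abs, abs_mul, abs_of_nonneg h0, abs_of_nonneg (Real.exp_pos _).le]
      calc x ^ (-μ) * Real.exp (-x * lam) ≤ x ^ (-μ) * 1 := by
            refine mul_le_mul_of_nonneg_left (Real.exp_le_one_iff.2 ?_) h0
            nlinarith [hx.1]
        _ = x ^ (-μ) := mul_one _

lemma integrableOn_F {μ : ℝ} (hμ : μ < 1) (τ : ℝ) :
    IntegrableOn (fun σ : ℝ => σ ^ (-μ) * Real.exp (-σ)) (Ioo 0 τ) := by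
  have := integrableOn_aux hμ (zero_le_one (α := ℝ)) τ
  simpa using this

lemma integral_rpow_Ioo {μ : ℝ} (hμ : μ < 1) {τ : ℝ} (hτ : 0 ≤ τ) :
    ∫ σ in Ioo (0:ℝ) τ, σ ^ (-μ) = τ ^ (1 - μ) / (1 - μ) := by
  rw [← MeasureTheory.integral_Ioc_eq_integral_Ioo, ← intervalIntegral.integral_of_le hτ,
    integral_rpow (Or.inl (by linarith))]
  rw [Real.zero_rpow (by linarith : -μ + 1 ≠ 0)]
  have h : -μ + 1 = 1 - μ := by ring
  rw [h, sub_zero]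

lemma integrableOn_exp_neg :
    IntegrableOn (fun σ : ℝ => Real.exp (-σ)) (Ioi (0:ℝ)) := by
  have := exp_neg_integrableOn_Ioi 0 (one_pos (α := ℝ))
  simpa using this

/-- Uniform bound on `∫_{(0,τ)} σ^{-μ} e^{-σ}`. -/
lemma integral_F_le {μ : ℝ} (hμ0 : 0 ≤ μ) (hμ1 : μ < 1) (τ : ℝ) :
    ∫ σ in Ioo (0:ℝ) τ, σ ^ (-μ) * Real.exp (-σ) ≤ 1 / (1 - μ) + 1 := by
  have hind : Integrable ((Ioo (0:ℝ) 1).indicator fun σ : ℝ => σ ^ (-μ)) :=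
    ((intervalIntegral.integrableOn_Ioo_rpow_iff one_pos).2
      (by linarith)).integrable_indicator measurableSet_Ioo
  have hexp : IntegrableOn (fun σ : ℝ => Real.exp (-σ)) (Ioo (0:ℝ) τ) :=
    integrableOn_exp_neg.mono_set (fun x hx => hx.1)
  have hmono : ∫ σ in Ioo (0:ℝ) τ, σ ^ (-μ) * Real.exp (-σ) ≤
      ∫ σ in Ioo (0:ℝ) τ, ((Ioo (0:ℝ) 1).indicator (fun σ : ℝ => σ ^ (-μ)) σ
        + Real.exp (-σ)) := by
    refine setIntegral_mono_on (integrableOn_F hμ1 τ)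
      ((hind.integrableOn).add hexp) measurableSet_Ioo ?_
    intro x hx
    rcases lt_or_ge x 1 with h1 | h1
    · have hmem : x ∈ Ioo (0:ℝ) 1 := ⟨hx.1, h1⟩
      rw [Set.indicator_of_mem hmem]
      have h2 : x ^ (-μ) * Real.exp (-x) ≤ x ^ (-μ) * 1 :=
        mul_le_mul_of_nonneg_left (Real.exp_le_one_iff.2 (by linarith [hx.1.le]))
          (Real.rpow_nonneg hx.1.le _)
      nlinarith [Real.exp_pos (-x), Real.rpow_nonneg hx.1.le (-μ)]
    · rw [Set.indicator_of_notMem (fun hc => absurd hc.2 (not_lt.2 h1))]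
      have hx1 : x ^ (-μ) ≤ 1 :=
        Real.rpow_le_one_of_one_le_of_nonpos h1 (by linarith)
      have hxe : x ^ (-μ) * Real.exp (-x) ≤ 1 * Real.exp (-x) :=
        mul_le_mul_of_nonneg_right hx1 (Real.exp_pos _).le
      nlinarith [Real.exp_pos (-x)]
  have hsplit : ∫ σ in Ioo (0:ℝ) τ, ((Ioo (0:ℝ) 1).indicator (fun σ : ℝ => σ ^ (-μ)) σ
      + Real.exp (-σ)) =
      (∫ σ in Ioo (0:ℝ) τ, (Ioo (0:ℝ) 1).indicator (fun σ : ℝ => σ ^ (-μ)) σ)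
      + ∫ σ in Ioo (0:ℝ) τ, Real.exp (-σ) :=
    integral_add hind.integrableOn hexp
  have h1 : ∫ σ in Ioo (0:ℝ) τ, (Ioo (0:ℝ) 1).indicator (fun σ : ℝ => σ ^ (-μ)) σ
      ≤ 1 / (1 - μ) := by
    rw [setIntegral_indicator measurableSet_Ioo]
    have hle : ∫ σ in Ioo (0:ℝ) τ ∩ Ioo (0:ℝ) 1, σ ^ (-μ) ≤ ∫ σ in Ioo (0:ℝ) 1, σ ^ (-μ) := by
      refine setIntegral_mono_set
        ((intervalIntegral.integrableOn_Ioo_rpow_iff one_pos).2 (by linarith)) ?_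
        (HasSubset.Subset.eventuallyLE Set.inter_subset_right)
      filter_upwards [ae_restrict_mem measurableSet_Ioo] with x hx
      exact Real.rpow_nonneg hx.1.le _
    calc ∫ σ in Ioo (0:ℝ) τ ∩ Ioo (0:ℝ) 1, σ ^ (-μ) ≤ ∫ σ in Ioo (0:ℝ) 1, σ ^ (-μ) := hle
      _ = 1 / (1 - μ) := by rw [integral_rpow_Ioo hμ1 zero_le_one, Real.one_rpow]
  have h2 : ∫ σ in Ioo (0:ℝ) τ, Real.exp (-σ) ≤ 1 := by
    have hle : ∫ σ in Ioo (0:ℝ) τ, Real.exp (-σ) ≤ ∫ σ in Ioi (0:ℝ), Real.exp (-σ) :=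
      setIntegral_mono_set integrableOn_exp_neg
        (Filter.Eventually.of_forall fun x => (Real.exp_pos _).le)
        (HasSubset.Subset.eventuallyLE fun x hx => hx.1)
    calc ∫ σ in Ioo (0:ℝ) τ, Real.exp (-σ) ≤ ∫ σ in Ioi (0:ℝ), Real.exp (-σ) := hle
      _ = 1 := integral_exp_neg_Ioi_zero
  calc ∫ σ in Ioo (0:ℝ) τ, σ ^ (-μ) * Real.exp (-σ)
      ≤ _ := hmono
    _ = _ := hsplit
    _ ≤ 1 / (1 - μ) + 1 := add_le_add h1 h2

lemma bddAbove_C {μ δ : ℝ} (hμ0 : 0 ≤ μ) (hμ1 : μ < 1) (hδ0 : 0 ≤ δ) (hδμ : δ ≤ 1 - μ) :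
    ∀ y ∈ ((fun τ : ℝ => τ ^ (-δ) * ∫ σ in Ioo (0:ℝ) τ, σ ^ (-μ) * Real.exp (-σ)) '' Ioi 0),
      y ≤ 1 / (1 - μ) + 1 := by
  rintro y ⟨τ, hτ, rfl⟩
  simp only [Set.mem_Ioi] at hτ
  have hτd : (0:ℝ) ≤ τ ^ (-δ) := Real.rpow_nonneg hτ.le _
  have hInonneg : 0 ≤ ∫ σ in Ioo (0:ℝ) τ, σ ^ (-μ) * Real.exp (-σ) := by
    refine setIntegral_nonneg measurableSet_Ioo fun x hx => ?_
    exact mul_nonneg (Real.rpow_nonneg hx.1.le _) (Real.exp_pos _).le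
  have hpos : (0:ℝ) < 1 - μ := by linarith
  rcases le_or_gt τ 1 with h1 | h1
  · have hI : ∫ σ in Ioo (0:ℝ) τ, σ ^ (-μ) * Real.exp (-σ) ≤ τ ^ (1 - μ) / (1 - μ) := by
      have hmono : ∫ σ in Ioo (0:ℝ) τ, σ ^ (-μ) * Real.exp (-σ)
          ≤ ∫ σ in Ioo (0:ℝ) τ, σ ^ (-μ) := by
        refine setIntegral_mono_on (integrableOn_F hμ1 τ)
          ((intervalIntegral.integrableOn_Ioo_rpow_iff hτ).2 (by linarith))
          measurableSet_Ioo fun x hx => ?_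
        calc x ^ (-μ) * Real.exp (-x) ≤ x ^ (-μ) * 1 :=
              mul_le_mul_of_nonneg_left (Real.exp_le_one_iff.2 (by linarith [hx.1.le]))
                (Real.rpow_nonneg hx.1.le _)
          _ = x ^ (-μ) := mul_one _
      rw [integral_rpow_Ioo hμ1 hτ.le] at hmono
      exact hmono
    calc τ ^ (-δ) * ∫ σ in Ioo (0:ℝ) τ, σ ^ (-μ) * Real.exp (-σ)
        ≤ τ ^ (-δ) * (τ ^ (1 - μ) / (1 - μ)) := mul_le_mul_of_nonneg_left hI hτd
      _ = τ ^ (-δ + (1 - μ)) / (1 - μ) := by rw [Real.rpow_add hτ]; ring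
      _ ≤ 1 / (1 - μ) := by
          gcongr
          exact Real.rpow_le_one hτ.le h1 (by linarith)
      _ ≤ 1 / (1 - μ) + 1 := by linarith
  · have hτd1 : τ ^ (-δ) ≤ 1 :=
      Real.rpow_le_one_of_one_le_of_nonpos h1.le (by linarith)
    calc τ ^ (-δ) * ∫ σ in Ioo (0:ℝ) τ, σ ^ (-μ) * Real.exp (-σ)
        ≤ 1 * ∫ σ in Ioo (0:ℝ) τ, σ ^ (-μ) * Real.exp (-σ) :=
          mul_le_mul_of_nonneg_right hτd1 hInonneg
      _ = ∫ σ in Ioo (0:ℝ) τ, σ ^ (-μ) * Real.exp (-σ) := one_mul _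
      _ ≤ 1 / (1 - μ) + 1 := integral_F_le hμ0 hμ1 τ

end Lem514

/-- Key scalar estimate in the proof of Lemma 5.14: for `0 ≤ α ≤ 1`, `0 ≤ μ ≤ b < 1`,
`δ = 1 - α - μ ≥ 0`, `λ > 0` and `0 < s ≤ T < ∞`,
`∫ₛᵀ t^{δ-b} λ^α e^{-(t-s)λ} dt ≤ s^{μ-b} T^{2δ} C(μ,δ)`. -/
theorem scalar_estimate_lemma514 (α μ b δ : ℝ) (hα0 : 0 ≤ α) (hα1 : α ≤ 1)
    (hμ0 : 0 ≤ μ) (hμb : μ ≤ b) (hb1 : b < 1) (hδ : δ = 1 - α - μ) (hδ0 : 0 ≤ δ)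
    (lam : ℝ) (hlam : 0 < lam) (s T : ℝ) (hs : 0 < s) (hsT : s ≤ T) :
    ∫ t in Set.Ioc s T, t ^ (δ - b) * lam ^ α * Real.exp (-(t - s) * lam) ≤
      s ^ (μ - b) * T ^ (2 * δ) * Cconst μ δ := by
  have hμ1 : μ < 1 := lt_of_le_of_lt hμb hb1
  have hδμ : δ ≤ 1 - μ := by rw [hδ]; linarith
  have hT0 : (0:ℝ) < T := lt_of_lt_of_le hs hsT
  have hM := Lem514.bddAbove_C hμ0 hμ1 hδ0 hδμ
  have hbdd : BddAbove ((fun τ : ℝ => τ ^ (-δ) *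
      ∫ σ in Set.Ioo (0:ℝ) τ, σ ^ (-μ) * Real.exp (-σ)) '' Set.Ioi 0) := ⟨_, hM⟩
  have hC0 : 0 ≤ Cconst μ δ := by
    have hmem : (1:ℝ) ^ (-δ) * ∫ σ in Set.Ioo (0:ℝ) 1, σ ^ (-μ) * Real.exp (-σ) ∈
        ((fun τ : ℝ => τ ^ (-δ) *
          ∫ σ in Set.Ioo (0:ℝ) τ, σ ^ (-μ) * Real.exp (-σ)) '' Set.Ioi 0) :=
      Set.mem_image_of_mem _ (Set.mem_Ioi.2 one_pos)
    have hle := le_csSup hbdd hmem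
    have hnn : 0 ≤ (1:ℝ) ^ (-δ) * ∫ σ in Set.Ioo (0:ℝ) 1, σ ^ (-μ) * Real.exp (-σ) := by
      refine mul_nonneg (Real.rpow_nonneg zero_le_one _) ?_
      exact setIntegral_nonneg measurableSet_Ioo fun x hx =>
        mul_nonneg (Real.rpow_nonneg hx.1.le _) (Real.exp_pos _).le
    exact hnn.trans hle
  have keyC : ∀ {τ : ℝ}, 0 < τ →
      ∫ σ in Set.Ioo (0:ℝ) τ, σ ^ (-μ) * Real.exp (-σ) ≤ τ ^ δ * Cconst μ δ := by
    intro τ hτ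
    have h1 : τ ^ (-δ) * ∫ σ in Set.Ioo (0:ℝ) τ, σ ^ (-μ) * Real.exp (-σ) ≤ Cconst μ δ :=
      le_csSup hbdd (Set.mem_image_of_mem _ hτ)
    calc ∫ σ in Set.Ioo (0:ℝ) τ, σ ^ (-μ) * Real.exp (-σ)
        = τ ^ δ * (τ ^ (-δ) * ∫ σ in Set.Ioo (0:ℝ) τ, σ ^ (-μ) * Real.exp (-σ)) := by
          rw [← mul_assoc, ← Real.rpow_add hτ]; simp
      _ ≤ τ ^ δ * Cconst μ δ := mul_le_mul_of_nonneg_left h1 (Real.rpow_nonneg hτ.le δ)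
  rcases eq_or_lt_of_le hsT with rfl | hsT'
  · rw [Set.Ioc_self]
    simp only [Measure.restrict_empty, integral_zero_measure]
    have h1 : (0:ℝ) ≤ s ^ (μ - b) := Real.rpow_nonneg hs.le _
    have h2 : (0:ℝ) ≤ s ^ (2 * δ) := Real.rpow_nonneg hs.le _
    positivity
  set U := T - s with hU
  have hU0 : 0 < U := by rw [hU]; linarith
  have hUlam : 0 < U * lam := by positivity
  -- integrability of the original integrand
  have hf1 : IntegrableOn (fun t : ℝ => t ^ (δ - b) * lam ^ α * Real.exp (-(t - s) * lam))
      (Set.Ioc s T) := by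
    refine (ContinuousOn.integrableOn_Icc ?_).mono_set Set.Ioc_subset_Icc_self
    refine ((ContinuousOn.rpow_const continuousOn_id fun x hx =>
      Or.inl (ne_of_gt (lt_of_lt_of_le hs hx.1))).mul continuousOn_const).mul ?_
    exact (Real.continuous_exp.comp (by continuity)).continuousOn
  -- integrability of the comparison integrand
  have hgInt : IntervalIntegrable (fun u : ℝ => u ^ (-μ) * Real.exp (-u * lam))
      MeasureTheory.volume 0 U := by
    rw [intervalIntegrable_iff_integrableOn_Ioo_of_le hU0.le]
    exact Lem514.integrableOn_aux hμ1 hlam.le U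
  have hf2 : IntegrableOn (fun t : ℝ => (t - s) ^ (-μ) * Real.exp (-(t - s) * lam))
      (Set.Ioc s T) := by
    have h := (hgInt.comp_sub_right s).1
    simp only [zero_add, hU, sub_add_cancel] at h
    exact h
  -- pointwise bound and monotonicity of the integral
  have hmono : ∫ t in Set.Ioc s T, t ^ (δ - b) * lam ^ α * Real.exp (-(t - s) * lam)
      ≤ ∫ t in Set.Ioc s T, (s ^ (μ - b) * T ^ δ * lam ^ α) *
          ((t - s) ^ (-μ) * Real.exp (-(t - s) * lam)) := by
    refine setIntegral_mono_on hf1 (hf2.const_mul _) measurableSet_Ioc fun t ht => ?_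
    have hts : 0 < t - s := sub_pos.2 ht.1
    have ht0 : 0 < t := hs.trans ht.1
    have e1 : t ^ (δ - b) = t ^ δ * t ^ (-μ) * t ^ (μ - b) := by
      rw [← Real.rpow_add ht0, ← Real.rpow_add ht0]
      congr 1; ring
    have b1 : t ^ δ ≤ T ^ δ := Real.rpow_le_rpow ht0.le ht.2 hδ0
    have b2 : t ^ (-μ) ≤ (t - s) ^ (-μ) :=
      Real.rpow_le_rpow_of_nonpos hts (by linarith) (by linarith)
    have b3 : t ^ (μ - b) ≤ s ^ (μ - b) :=
      Real.rpow_le_rpow_of_nonpos hs ht.1.le (by linarith)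
    have key : t ^ (δ - b) ≤ s ^ (μ - b) * T ^ δ * (t - s) ^ (-μ) := by
      rw [e1]
      calc t ^ δ * t ^ (-μ) * t ^ (μ - b)
          ≤ T ^ δ * (t - s) ^ (-μ) * s ^ (μ - b) := by
            refine mul_le_mul (mul_le_mul b1 b2 (Real.rpow_nonneg ht0.le _)
              (Real.rpow_nonneg hT0.le _)) b3 (Real.rpow_nonneg ht0.le _) ?_
            exact mul_nonneg (Real.rpow_nonneg hT0.le _) (Real.rpow_nonneg hts.le _)
        _ = s ^ (μ - b) * T ^ δ * (t - s) ^ (-μ) := by ring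
    calc t ^ (δ - b) * lam ^ α * Real.exp (-(t - s) * lam)
        ≤ (s ^ (μ - b) * T ^ δ * (t - s) ^ (-μ)) * lam ^ α * Real.exp (-(t - s) * lam) :=
          mul_le_mul_of_nonneg_right
            (mul_le_mul_of_nonneg_right key (Real.rpow_nonneg hlam.le _))
            (Real.exp_pos _).le
      _ = (s ^ (μ - b) * T ^ δ * lam ^ α) *
          ((t - s) ^ (-μ) * Real.exp (-(t - s) * lam)) := by ring
  rw [integral_const_mul] at hmono
  -- translation
  have hsub1 : ∫ t in Set.Ioc s T, (t - s) ^ (-μ) * Real.exp (-(t - s) * lam)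
      = ∫ u in Set.Ioc (0:ℝ) U, u ^ (-μ) * Real.exp (-u * lam) := by
    rw [← intervalIntegral.integral_of_le hsT, ← intervalIntegral.integral_of_le hU0.le]
    have h := intervalIntegral.integral_comp_sub_right (a := s) (b := T)
      (fun u : ℝ => u ^ (-μ) * Real.exp (-u * lam)) s
    simpa [hU] using h
  -- scaling
  have hsub2 : ∫ u in Set.Ioc (0:ℝ) U, u ^ (-μ) * Real.exp (-u * lam)
      = lam ^ (μ - 1) * ∫ σ in Set.Ioo (0:ℝ) (U * lam), σ ^ (-μ) * Real.exp (-σ) := by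
    rw [← intervalIntegral.integral_of_le hU0.le]
    have hcong : Set.EqOn (fun u : ℝ => u ^ (-μ) * Real.exp (-u * lam))
        (fun u : ℝ => lam ^ μ * ((fun σ : ℝ => σ ^ (-μ) * Real.exp (-σ)) (u * lam)))
        (Set.uIcc 0 U) := by
      intro u hu
      rw [Set.uIcc_of_le hU0.le] at hu
      simp only
      rw [Real.mul_rpow hu.1 hlam.le, show (-(u * lam)) = -u * lam by ring,
        show lam ^ μ * (u ^ (-μ) * lam ^ (-μ) * Real.exp (-u * lam)) =
          lam ^ μ * lam ^ (-μ) * (u ^ (-μ) * Real.exp (-u * lam)) by ring,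
        ← Real.rpow_add hlam]
      norm_num
    rw [intervalIntegral.integral_congr hcong,
      intervalIntegral.integral_const_mul,
      intervalIntegral.integral_comp_mul_right
        (fun σ : ℝ => σ ^ (-μ) * Real.exp (-σ)) (ne_of_gt hlam),
      zero_mul, smul_eq_mul,
      intervalIntegral.integral_of_le hUlam.le,
      MeasureTheory.integral_Ioc_eq_integral_Ioo,
      ← mul_assoc]
    congr 1
    rw [← Real.rpow_neg_one lam, ← Real.rpow_add hlam]
    norm_num
    rw [show μ + -1 = μ - 1 from by ring]
  -- final assembly
  have hfinal : lam ^ α * ∫ u in Set.Ioc (0:ℝ) U, u ^ (-μ) * Real.exp (-u * lam)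
      ≤ T ^ δ * Cconst μ δ := by
    rw [hsub2]
    have h1 : ∫ σ in Set.Ioo (0:ℝ) (U * lam), σ ^ (-μ) * Real.exp (-σ)
        ≤ (U * lam) ^ δ * Cconst μ δ := keyC hUlam
    calc lam ^ α * (lam ^ (μ - 1) *
          ∫ σ in Set.Ioo (0:ℝ) (U * lam), σ ^ (-μ) * Real.exp (-σ))
        = lam ^ (α + (μ - 1)) *
          ∫ σ in Set.Ioo (0:ℝ) (U * lam), σ ^ (-μ) * Real.exp (-σ) := by
          rw [← mul_assoc, ← Real.rpow_add hlam]
      _ ≤ lam ^ (α + (μ - 1)) * ((U * lam) ^ δ * Cconst μ δ) :=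
          mul_le_mul_of_nonneg_left h1 (Real.rpow_nonneg hlam.le _)
      _ = U ^ δ * Cconst μ δ := by
          rw [Real.mul_rpow hU0.le hlam.le, show α + (μ - 1) = -δ by rw [hδ]; ring,
            show lam ^ (-δ) * (U ^ δ * lam ^ δ * Cconst μ δ) =
              lam ^ (-δ) * lam ^ δ * (U ^ δ * Cconst μ δ) by ring,
            ← Real.rpow_add hlam]
          norm_num
      _ ≤ T ^ δ * Cconst μ δ := by
          refine mul_le_mul_of_nonneg_right ?_ hC0
          exact Real.rpow_le_rpow hU0.le (by rw [hU]; linarith) hδ0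
  calc ∫ t in Set.Ioc s T, t ^ (δ - b) * lam ^ α * Real.exp (-(t - s) * lam)
      ≤ (s ^ (μ - b) * T ^ δ * lam ^ α) *
        ∫ t in Set.Ioc s T, (t - s) ^ (-μ) * Real.exp (-(t - s) * lam) := hmono
    _ = (s ^ (μ - b) * T ^ δ) *
        (lam ^ α * ∫ u in Set.Ioc (0:ℝ) U, u ^ (-μ) * Real.exp (-u * lam)) := by
        rw [hsub1]; ring
    _ ≤ (s ^ (μ - b) * T ^ δ) * (T ^ δ * Cconst μ δ) := by
        refine mul_le_mul_of_nonneg_left hfinal ?_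
        positivity
    _ = s ^ (μ - b) * T ^ (2 * δ) * Cconst μ δ := by
        rw [show s ^ (μ - b) * T ^ δ * (T ^ δ * Cconst μ δ) =
          s ^ (μ - b) * (T ^ δ * T ^ δ) * Cconst μ δ by ring,
          ← Real.rpow_add hT0, two_mul]
end

section
/- Let H be a complex Hilbert space and L a bounded, non-negative, self-adjoint operator on H. Let α, μ, b, δ be real numbers with 0 ≤ α ≤ 1, 0 ≤ μ ≤ b < 1 and δ = 1 - α - μ ≥ 0. Then for all 0 < s ≤ T < ∞, ‖∫ₛᵀ t^{δ-b} L^α e^{-(t-s)L} dt‖ ≤ s^{μ-b} T^{2δ} C(μ,δ), where C(μ,δ) denotes sup_{τ>0} τ^{-δ} ∫₀^τ σ^{-μ} e^{-σ} dσ. In particular, for μ = 0 and 0 ≤ b < 1, ‖∫ₛᵀ t^{δ-b} L^α e^{-(t-s)L} dt‖ ≤ s^{-b} T^{2δ}. -/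
open MeasureTheory

/-- `L^α e^{-rL}`, defined by the continuous functional calculus of the self-adjoint
operator `L` applied to `λ ↦ λ^α e^{-rλ}`. -/
noncomputable def opPow {H : Type*} [NormedAddCommGroup H] [InnerProductSpace ℂ H]
    [CompleteSpace H] (L : H →L[ℂ] H) (α r : ℝ) : H →L[ℂ] H :=
  cfc (fun lam : ℝ => lam ^ α * Real.exp (-r * lam)) L

/-!
By the isometric continuous functional calculus, the operator norm is the supremum, over `x` in
the spectrum of `L` (which lies in `[0, ∞)`), of the scalar integral
`∫ₛᵀ t^(δ-b) x^α e^(-(t-s)x) dt`. On `(s, T]` we have `t^(δ-b) ≤ s^(μ-b) T^δ (t-s)^(-μ)`, and the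
substitution `σ = (t-s)x` turns what remains into `x^(α+μ-1) ∫₀^((T-s)x) σ^(-μ) e^(-σ) dσ`, which
is at most `C(μ,δ) (T-s)^δ` because `α + μ + δ = 1`. For `x = 0`, `α = 0` the bound comes instead
from `C(μ, 1-μ) ≥ 1/(1-μ)`, the limit `τ → 0` in the definition of `C`.
-/

open Real Set Topology

section KernelIntegral

variable {μ δ : ℝ}

lemma integrableOn_Ioi_rpow_neg_mul_exp_neg (hμ : μ < 1) :
    IntegrableOn (fun σ : ℝ => σ ^ (-μ) * exp (-σ)) (Ioi 0) := by
  convert GammaIntegral_convergent (sub_pos.mpr hμ) using 2 with σ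
  rw [mul_comm, sub_sub_cancel_left]

lemma setIntegral_Ioo_rpow_neg_mul_exp_neg_nonneg (τ : ℝ) :
    0 ≤ ∫ σ in Ioo 0 τ, σ ^ (-μ) * exp (-σ) :=
  setIntegral_nonneg measurableSet_Ioo fun _ hσ => mul_nonneg (rpow_nonneg hσ.1.le _) (exp_nonneg _)

lemma setIntegral_Ioo_rpow_neg_mul_exp_neg_le_Gamma (hμ : μ < 1) (τ : ℝ) :
    ∫ σ in Ioo 0 τ, σ ^ (-μ) * exp (-σ) ≤ Gamma (1 - μ) := by
  rw [Gamma_eq_integral (sub_pos.mpr hμ)]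
  simp_rw [sub_sub_cancel_left, mul_comm (exp _)]
  exact setIntegral_mono_set (integrableOn_Ioi_rpow_neg_mul_exp_neg hμ)
    (ae_restrict_of_forall_mem measurableSet_Ioi fun _ hσ =>
      mul_nonneg (rpow_nonneg (le_of_lt hσ) _) (exp_nonneg _))
    Ioo_subset_Ioi_self.eventuallyLE

lemma setIntegral_Ioo_rpow_neg (hμ : μ < 1) {τ : ℝ} (hτ : 0 ≤ τ) :
    ∫ σ in Ioo 0 τ, σ ^ (-μ) = τ ^ (1 - μ) / (1 - μ) := by
  rw [← integral_Ioc_eq_integral_Ioo, ← intervalIntegral.integral_of_le hτ,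
    integral_rpow (Or.inl (by linarith)), zero_rpow (by linarith), neg_add_eq_sub, sub_zero]

lemma setIntegral_Ioo_rpow_neg_mul_exp_neg_le_rpow (hμ : μ < 1) {τ : ℝ} (hτ : 0 ≤ τ) :
    ∫ σ in Ioo 0 τ, σ ^ (-μ) * exp (-σ) ≤ τ ^ (1 - μ) / (1 - μ) := by
  rw [← setIntegral_Ioo_rpow_neg hμ hτ]
  refine integral_mono_of_nonneg
    (ae_restrict_of_forall_mem measurableSet_Ioo fun _ hσ =>
      mul_nonneg (rpow_nonneg hσ.1.le _) (exp_nonneg _))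
    ((intervalIntegral.intervalIntegrable_rpow' (by linarith)).1.mono_set Ioo_subset_Ioc_self)
    (ae_restrict_of_forall_mem measurableSet_Ioo fun σ hσ => ?_)
  exact mul_le_of_le_one_right (rpow_nonneg hσ.1.le _) (exp_le_one_iff.mpr (by linarith [hσ.1]))

lemma rpow_neg_mul_setIntegral_le (hμ : μ < 1) (hδ0 : 0 ≤ δ) (hδμ : δ ≤ 1 - μ) {τ : ℝ}
    (hτ : 0 < τ) :
    τ ^ (-δ) * ∫ σ in Ioo 0 τ, σ ^ (-μ) * exp (-σ) ≤ max ((1 - μ)⁻¹) (Gamma (1 - μ)) := by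
  rcases le_total τ 1 with hτ1 | hτ1
  · refine le_max_of_le_left ?_
    calc τ ^ (-δ) * ∫ σ in Ioo 0 τ, σ ^ (-μ) * exp (-σ)
        ≤ τ ^ (-δ) * (τ ^ (1 - μ) / (1 - μ)) := by
          gcongr; exact setIntegral_Ioo_rpow_neg_mul_exp_neg_le_rpow hμ hτ.le
      _ = τ ^ (1 - μ - δ) * (1 - μ)⁻¹ := by
          rw [sub_eq_neg_add (1 - μ), rpow_add hτ, div_eq_mul_inv, mul_assoc]
      _ ≤ 1 * (1 - μ)⁻¹ := by
          have : 0 < 1 - μ := by linarith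
          gcongr; exact rpow_le_one hτ.le hτ1 (by linarith)
      _ = (1 - μ)⁻¹ := one_mul _
  · refine le_max_of_le_right ?_
    calc τ ^ (-δ) * ∫ σ in Ioo 0 τ, σ ^ (-μ) * exp (-σ) ≤ 1 * Gamma (1 - μ) :=
          mul_le_mul (rpow_le_one_of_one_le_of_nonpos hτ1 (by linarith))
            (setIntegral_Ioo_rpow_neg_mul_exp_neg_le_Gamma hμ τ)
            (setIntegral_Ioo_rpow_neg_mul_exp_neg_nonneg τ) zero_le_one
      _ = Gamma (1 - μ) := one_mul _

lemma rpow_neg_mul_setIntegral_le_Cconst (hμ : μ < 1) (hδ0 : 0 ≤ δ) (hδμ : δ ≤ 1 - μ)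
    {τ : ℝ} (hτ : 0 < τ) :
    τ ^ (-δ) * ∫ σ in Ioo 0 τ, σ ^ (-μ) * exp (-σ) ≤ Cconst μ δ :=
  le_csSup ⟨_, by rintro _ ⟨τ, hτ, rfl⟩; exact rpow_neg_mul_setIntegral_le hμ hδ0 hδμ hτ⟩
    ⟨τ, hτ, rfl⟩

lemma Cconst_nonneg (hμ : μ < 1) (hδ0 : 0 ≤ δ) (hδμ : δ ≤ 1 - μ) : 0 ≤ Cconst μ δ :=
  (mul_nonneg (rpow_nonneg zero_le_one _) (setIntegral_Ioo_rpow_neg_mul_exp_neg_nonneg 1)).trans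
    (rpow_neg_mul_setIntegral_le_Cconst hμ hδ0 hδμ one_pos)

lemma setIntegral_Ioo_rpow_neg_mul_exp_neg_le_Cconst_mul (hμ : μ < 1) (hδ0 : 0 ≤ δ)
    (hδμ : δ ≤ 1 - μ) {τ : ℝ} (hτ : 0 ≤ τ) :
    ∫ σ in Ioo 0 τ, σ ^ (-μ) * exp (-σ) ≤ Cconst μ δ * τ ^ δ := by
  rcases hτ.eq_or_lt with rfl | hτ
  · rw [Ioo_self, Measure.restrict_empty, integral_zero_measure]
    exact mul_nonneg (Cconst_nonneg hμ hδ0 hδμ) (rpow_nonneg le_rfl _)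
  calc ∫ σ in Ioo 0 τ, σ ^ (-μ) * exp (-σ)
      = τ ^ δ * (τ ^ (-δ) * ∫ σ in Ioo 0 τ, σ ^ (-μ) * exp (-σ)) := by
        rw [← mul_assoc, ← rpow_add hτ, add_neg_cancel, rpow_zero, one_mul]
    _ ≤ τ ^ δ * Cconst μ δ := by gcongr; exact rpow_neg_mul_setIntegral_le_Cconst hμ hδ0 hδμ hτ
    _ = Cconst μ δ * τ ^ δ := mul_comm _ _

lemma inv_one_sub_le_Cconst (hμ : μ < 1) : (1 - μ)⁻¹ ≤ Cconst μ (1 - μ) := by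
  have hlim : Filter.Tendsto (fun τ : ℝ => exp (-τ) * (1 - μ)⁻¹) (𝓝[>] 0) (𝓝 ((1 - μ)⁻¹)) := by
    have hcont : Continuous fun τ : ℝ => exp (-τ) * (1 - μ)⁻¹ := by fun_prop
    simpa using (hcont.tendsto 0).mono_left nhdsWithin_le_nhds
  refine le_of_tendsto hlim (eventually_nhdsWithin_of_forall fun τ (hτ : 0 < τ) => ?_)
  calc exp (-τ) * (1 - μ)⁻¹
      = τ ^ (-(1 - μ)) * ((τ ^ (1 - μ) / (1 - μ)) * exp (-τ)) := by
        rw [div_eq_mul_inv, ← mul_assoc, ← mul_assoc, ← rpow_add hτ, neg_add_cancel, rpow_zero,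
          one_mul, mul_comm]
    _ = τ ^ (-(1 - μ)) * ∫ σ in Ioo 0 τ, σ ^ (-μ) * exp (-τ) := by
        rw [integral_mul_const, setIntegral_Ioo_rpow_neg hμ hτ.le]
    _ ≤ τ ^ (-(1 - μ)) * ∫ σ in Ioo 0 τ, σ ^ (-μ) * exp (-σ) := by
        refine mul_le_mul_of_nonneg_left (integral_mono_of_nonneg
          (ae_restrict_of_forall_mem measurableSet_Ioo fun _ hσ =>
      mul_nonneg (rpow_nonneg hσ.1.le _) (exp_nonneg _))
          ((integrableOn_Ioi_rpow_neg_mul_exp_neg hμ).mono_set Ioo_subset_Ioi_self)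
          (ae_restrict_of_forall_mem measurableSet_Ioo fun σ hσ => ?_)) (rpow_nonneg hτ.le _)
        exact mul_le_mul_of_nonneg_left (exp_le_exp.mpr (neg_le_neg hσ.2.le))
          (rpow_nonneg hσ.1.le _)
    _ ≤ Cconst μ (1 - μ) :=
        rpow_neg_mul_setIntegral_le_Cconst hμ (by linarith) le_rfl hτ

lemma Cconst_zero_le_one (hδ0 : 0 ≤ δ) (hδ1 : δ ≤ 1) : Cconst 0 δ ≤ 1 := by
  refine Real.sSup_le ?_ zero_le_one
  rintro _ ⟨τ, hτ : 0 < τ, rfl⟩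
  have hint : ∫ σ in Ioo 0 τ, σ ^ (-(0 : ℝ)) * exp (-σ) ≤ τ ^ δ := by
    rcases le_total τ 1 with hτ1 | hτ1
    · calc ∫ σ in Ioo 0 τ, σ ^ (-(0 : ℝ)) * exp (-σ) ≤ τ ^ (1 - 0 : ℝ) / (1 - 0) :=
            setIntegral_Ioo_rpow_neg_mul_exp_neg_le_rpow zero_lt_one hτ.le
        _ = τ ^ (1 : ℝ) := by norm_num
        _ ≤ τ ^ δ := rpow_le_rpow_of_exponent_ge hτ hτ1 hδ1
    · calc ∫ σ in Ioo 0 τ, σ ^ (-(0 : ℝ)) * exp (-σ) ≤ Gamma (1 - 0) :=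
            setIntegral_Ioo_rpow_neg_mul_exp_neg_le_Gamma zero_lt_one τ
        _ = 1 := by norm_num
        _ ≤ τ ^ δ := one_le_rpow hτ1 hδ0
  calc τ ^ (-δ) * ∫ σ in Ioo 0 τ, σ ^ (-(0 : ℝ)) * exp (-σ) ≤ τ ^ (-δ) * τ ^ δ := by gcongr
    _ = 1 := by rw [← rpow_add hτ, neg_add_cancel, rpow_zero]

end KernelIntegral

section ScalarEstimate

variable {α μ δ x : ℝ}

lemma intervalIntegral_rpow_neg_mul_exp_neg_mul (hx : 0 < x) {R : ℝ} (hR : 0 ≤ R) :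
    ∫ u in 0..R, u ^ (-μ) * exp (-u * x) =
      x ^ (μ - 1) * ∫ σ in Ioo 0 (R * x), σ ^ (-μ) * exp (-σ) := by
  have hsubst := intervalIntegral.integral_comp_mul_right
    (fun σ => σ ^ (-μ) * exp (-σ)) hx.ne' (a := 0) (b := R)
  calc ∫ u in 0..R, u ^ (-μ) * exp (-u * x)
      = ∫ u in 0..R, x ^ μ * ((u * x) ^ (-μ) * exp (-(u * x))) := by
        refine intervalIntegral.integral_congr fun u hu => ?_
        rw [uIcc_of_le hR] at hu
        simp only [mul_rpow hu.1 hx.le, rpow_neg hx.le, neg_mul]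
        field_simp
    _ = x ^ (μ - 1) * ∫ σ in Ioo 0 (R * x), σ ^ (-μ) * exp (-σ) := by
        rw [intervalIntegral.integral_const_mul, hsubst, zero_mul, smul_eq_mul,
          intervalIntegral.integral_of_le (by positivity), integral_Ioc_eq_integral_Ioo,
          rpow_sub_one hx.ne', div_eq_mul_inv, mul_assoc]

lemma rpow_mul_intervalIntegral_le_Cconst_mul (hα : 0 ≤ α) (hμ : μ < 1) (hδ : δ = 1 - α - μ)
    (hδ0 : 0 ≤ δ) (hx : 0 ≤ x) {R : ℝ} (hR : 0 ≤ R) :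
    x ^ α * ∫ u in 0..R, u ^ (-μ) * exp (-u * x) ≤ Cconst μ δ * R ^ δ := by
  have hδμ : δ ≤ 1 - μ := by linarith
  rcases hx.eq_or_lt with rfl | hx
  · rcases hα.eq_or_lt with rfl | hα
    · obtain rfl : δ = 1 - μ := by linarith
      simp only [rpow_zero, mul_zero, exp_zero, mul_one, one_mul]
      rw [intervalIntegral.integral_of_le hR, integral_Ioc_eq_integral_Ioo,
        setIntegral_Ioo_rpow_neg hμ hR, div_eq_mul_inv, mul_comm]
      exact mul_le_mul_of_nonneg_right (inv_one_sub_le_Cconst hμ) (rpow_nonneg hR _)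
    · rw [zero_rpow hα.ne', zero_mul]
      exact mul_nonneg (Cconst_nonneg hμ hδ0 hδμ) (rpow_nonneg hR _)
  have hpow : x ^ (α + μ - 1) * x ^ δ = 1 := by
    rw [← rpow_add hx, show α + μ - 1 + δ = 0 by linarith, rpow_zero]
  calc x ^ α * ∫ u in 0..R, u ^ (-μ) * exp (-u * x)
      = x ^ (α + μ - 1) * ∫ σ in Ioo 0 (R * x), σ ^ (-μ) * exp (-σ) := by
        rw [intervalIntegral_rpow_neg_mul_exp_neg_mul hx hR, ← mul_assoc, ← rpow_add hx,
          add_sub_assoc]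
    _ ≤ x ^ (α + μ - 1) * (Cconst μ δ * (R * x) ^ δ) := by
        gcongr
        exact setIntegral_Ioo_rpow_neg_mul_exp_neg_le_Cconst_mul hμ hδ0 hδμ (by positivity)
    _ = Cconst μ δ * R ^ δ := by
        rw [mul_rpow hR hx.le]
        linear_combination (Cconst μ δ * R ^ δ) * hpow

lemma rpow_le_mul_rpow_sub_of_mem_Ioc {b s T t : ℝ} (hμ0 : 0 ≤ μ) (hμb : μ ≤ b) (hδ0 : 0 ≤ δ)
    (hs : 0 < s) (ht : t ∈ Ioc s T) :
    t ^ (δ - b) ≤ s ^ (μ - b) * T ^ δ * (t - s) ^ (-μ) := by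
  have ht0 : 0 < t := hs.trans ht.1
  rw [show δ - b = (μ - b) + δ + -μ by ring, rpow_add ht0, rpow_add ht0]
  have hpow_μb : t ^ (μ - b) ≤ s ^ (μ - b) := rpow_le_rpow_of_nonpos hs ht.1.le (by linarith)
  have hpow_δ : t ^ δ ≤ T ^ δ := rpow_le_rpow ht0.le ht.2 hδ0
  have hpow_μ : t ^ (-μ) ≤ (t - s) ^ (-μ) :=
    rpow_le_rpow_of_nonpos (sub_pos.mpr ht.1) (sub_le_self _ hs.le) (by linarith)
  have := hs.le.trans (ht.1.le.trans ht.2)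
  gcongr

lemma setIntegral_Ioc_rpow_mul_rpow_mul_exp_le {b s T : ℝ} (hα : 0 ≤ α) (hμ0 : 0 ≤ μ)
    (hμb : μ ≤ b) (hb1 : b < 1) (hδ : δ = 1 - α - μ) (hδ0 : 0 ≤ δ) (hs : 0 < s) (hsT : s ≤ T)
    (hx : 0 ≤ x) :
    ∫ t in Ioc s T, t ^ (δ - b) * (x ^ α * exp (-(t - s) * x)) ≤
      s ^ (μ - b) * T ^ (2 * δ) * Cconst μ δ := by
  have hμ1 : μ < 1 := hμb.trans_lt hb1
  have hT : 0 < T := hs.trans_le hsT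
  set c := s ^ (μ - b) * T ^ δ
  have hker : IntervalIntegrable (fun u => u ^ (-μ) * exp (-u * x)) volume 0 (T - s) :=
    (intervalIntegral.intervalIntegrable_rpow' (by linarith)).mul_continuousOn (by fun_prop)
  have hker' : IntegrableOn (fun t => (t - s) ^ (-μ) * exp (-(t - s) * x)) (Ioc s T) := by
    simpa using (hker.comp_sub_right s).1
  calc ∫ t in Ioc s T, t ^ (δ - b) * (x ^ α * exp (-(t - s) * x))
      ≤ ∫ t in Ioc s T, c * x ^ α * ((t - s) ^ (-μ) * exp (-(t - s) * x)) := by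
        refine integral_mono_of_nonneg (ae_restrict_of_forall_mem measurableSet_Ioc fun t ht => ?_)
          (hker'.const_mul _) (ae_restrict_of_forall_mem measurableSet_Ioc fun t ht => ?_)
        · have := (hs.trans ht.1).le; positivity
        · calc t ^ (δ - b) * (x ^ α * exp (-(t - s) * x))
              ≤ c * (t - s) ^ (-μ) * (x ^ α * exp (-(t - s) * x)) := by
                gcongr; exact rpow_le_mul_rpow_sub_of_mem_Ioc hμ0 hμb hδ0 hs ht
            _ = c * x ^ α * ((t - s) ^ (-μ) * exp (-(t - s) * x)) := by ring
    _ = c * (x ^ α * ∫ u in 0..T - s, u ^ (-μ) * exp (-u * x)) := by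
        rw [integral_const_mul, ← intervalIntegral.integral_of_le hsT,
          intervalIntegral.integral_comp_sub_right (fun u => u ^ (-μ) * exp (-u * x)), sub_self,
          mul_assoc]
    _ ≤ c * (Cconst μ δ * (T - s) ^ δ) := by
        refine mul_le_mul_of_nonneg_left ?_ (by positivity)
        exact rpow_mul_intervalIntegral_le_Cconst_mul hα hμ1 hδ hδ0 hx (sub_nonneg.mpr hsT)
    _ ≤ c * (Cconst μ δ * T ^ δ) := by
        have := Cconst_nonneg hμ1 hδ0 (by linarith)
        have := sub_nonneg.mpr hsT
        gcongr
        exact sub_le_self _ hs.le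
    _ = s ^ (μ - b) * T ^ (2 * δ) * Cconst μ δ := by rw [two_mul, rpow_add hT]; ring

end ScalarEstimate

lemma norm_setIntegral_Ioc_cfc_le {A : Type*} [CStarAlgebra A] {a : A} (ha : IsSelfAdjoint a)
    {f : ℝ → ℝ → ℝ} {s T M : ℝ} (hM : 0 ≤ M)
    (hf : ContinuousOn (Function.uncurry f) (Icc s T ×ˢ spectrum ℝ a))
    (hbound : ∀ x ∈ spectrum ℝ a, |∫ t in Ioc s T, f t x| ≤ M) :
    ‖∫ t in Ioc s T, cfc (f t) a‖ ≤ M := by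
  obtain ⟨C, hC⟩ := (isCompact_Icc.prod (spectrum.isCompact a)).exists_bound_of_continuousOn hf
  rw [← cfc_setIntegral measurableSet_Ioc f (fun _ => C) a
    (hf.mono (prod_mono Ioc_subset_Icc_self subset_rfl))
    (ae_restrict_of_forall_mem measurableSet_Ioc fun t ht x hx =>
      hC (t, x) ⟨Ioc_subset_Icc_self ht, hx⟩)
    (hasFiniteIntegral_const C) ha]
  exact norm_cfc_le hM hbound

section Operator

variable {H : Type*} [NormedAddCommGroup H] [InnerProductSpace ℂ H] [CompleteSpace H]
  {L : H →L[ℂ] H}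

lemma spectrum_nonneg_of_inner_nonneg (hLsa : IsSelfAdjoint L)
    (hLpos : ∀ x : H, 0 ≤ (inner ℂ (L x) x : ℂ).re) {x : ℝ} (hx : x ∈ spectrum ℝ L) : 0 ≤ x :=
  spectrum_nonneg_of_nonneg
    ((ContinuousLinearMap.nonneg_iff_isPositive L).mpr ⟨hLsa.isSymmetric, hLpos⟩) hx

lemma smul_opPow_eq_cfc {α : ℝ} (hα : 0 ≤ α) (c r : ℝ) :
    c • opPow L α r = cfc (fun x => c * (x ^ α * exp (-r * x))) L :=
  (cfc_const_mul _ _ L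
    ((continuous_id.rpow_const fun _ => Or.inr hα).mul (by fun_prop)).continuousOn).symm

lemma norm_setIntegral_rpow_smul_opPow_le (hLsa : IsSelfAdjoint L)
    (hLpos : ∀ x : H, 0 ≤ (inner ℂ (L x) x : ℂ).re) {α μ b δ s T : ℝ} (hα0 : 0 ≤ α)
    (hμ0 : 0 ≤ μ) (hμb : μ ≤ b) (hb1 : b < 1) (hδ : δ = 1 - α - μ) (hδ0 : 0 ≤ δ) (hs : 0 < s)
    (hsT : s ≤ T) :
    ‖∫ t in Ioc s T, t ^ (δ - b) • opPow L α (t - s)‖ ≤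
      s ^ (μ - b) * T ^ (2 * δ) * Cconst μ δ := by
  have hT : 0 ≤ T := hs.le.trans hsT
  have hC := Cconst_nonneg (hμb.trans_lt hb1) hδ0 (by linarith)
  have hcont : ContinuousOn (fun p : ℝ × ℝ => p.1 ^ (δ - b) * (p.2 ^ α * exp (-(p.1 - s) * p.2)))
      (Icc s T ×ˢ spectrum ℝ L) :=
    (continuousOn_fst.rpow_const fun p hp => Or.inl (hs.trans_le hp.1.1).ne').mul
      ((continuous_snd.rpow_const fun _ => Or.inr hα0).mul (by fun_prop)).continuousOn
  simp_rw [smul_opPow_eq_cfc hα0]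
  refine norm_setIntegral_Ioc_cfc_le hLsa (by positivity) hcont fun x hx => ?_
  have hx0 := spectrum_nonneg_of_inner_nonneg hLsa hLpos hx
  rw [abs_of_nonneg (setIntegral_nonneg measurableSet_Ioc fun t ht => by
    have := (hs.trans ht.1).le; positivity)]
  exact setIntegral_Ioc_rpow_mul_rpow_mul_exp_le hα0 hμ0 hμb hb1 hδ hδ0 hs hsT hx0

end Operator

theorem operator_integral_estimate_general
    {H : Type*} [NormedAddCommGroup H] [InnerProductSpace ℂ H] [CompleteSpace H]
    (L : H →L[ℂ] H) (hLsa : IsSelfAdjoint L) (hLpos : ∀ x : H, 0 ≤ (inner ℂ (L x) x : ℂ).re)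
    (α μ b δ : ℝ) (hα0 : 0 ≤ α) (hμ0 : 0 ≤ μ) (hμb : μ ≤ b) (hb1 : b < 1)
    (hδ : δ = 1 - α - μ) (hδ0 : 0 ≤ δ)
    (s T : ℝ) (hs : 0 < s) (hsT : s ≤ T) :
    ‖∫ t in Set.Ioc s T, t ^ (δ - b) • opPow L α (t - s)‖ ≤
        s ^ (μ - b) * T ^ (2 * δ) * Cconst μ δ
    ∧ (μ = 0 →
        ‖∫ t in Set.Ioc s T, t ^ (δ - b) • opPow L α (t - s)‖ ≤ s ^ (-b) * T ^ (2 * δ)) := by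
  have hbound := norm_setIntegral_rpow_smul_opPow_le hLsa hLpos hα0 hμ0 hμb hb1 hδ hδ0 hs hsT
  refine ⟨hbound, fun hμ => ?_⟩
  subst hμ
  have hT : 0 ≤ T := hs.le.trans hsT
  calc ‖∫ t in Ioc s T, t ^ (δ - b) • opPow L α (t - s)‖
      ≤ s ^ (0 - b) * T ^ (2 * δ) * Cconst 0 δ := hbound
    _ ≤ s ^ (0 - b) * T ^ (2 * δ) * 1 :=
        mul_le_mul_of_nonneg_left (Cconst_zero_le_one hδ0 (by linarith)) (by positivity)
    _ = s ^ (-b) * T ^ (2 * δ) := by rw [mul_one, zero_sub]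

/-- Lemma 5.14: for a bounded non-negative self-adjoint operator `L`, `0 ≤ α ≤ 1`,
`0 ≤ μ ≤ b < 1`, `δ = 1-α-μ ≥ 0`, and `0 < s ≤ T`,
`‖∫ₛᵀ t^{δ-b} L^α e^{-(t-s)L} dt‖ ≤ s^{μ-b} T^{2δ} C(μ,δ)`; in particular for `μ = 0`
the bound is `s^{-b} T^{2δ}`. -/
theorem operator_integral_estimate
    {H : Type*} [NormedAddCommGroup H] [InnerProductSpace ℂ H] [CompleteSpace H]
    (L : H →L[ℂ] H) (hLsa : IsSelfAdjoint L) (hLpos : ∀ x : H, 0 ≤ (inner ℂ (L x) x : ℂ).re)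
    (α μ b δ : ℝ) (hα0 : 0 ≤ α) (hα1 : α ≤ 1) (hμ0 : 0 ≤ μ) (hμb : μ ≤ b) (hb1 : b < 1)
    (hδ : δ = 1 - α - μ) (hδ0 : 0 ≤ δ)
    (s T : ℝ) (hs : 0 < s) (hsT : s ≤ T) :
    ‖∫ t in Set.Ioc s T, t ^ (δ - b) • opPow L α (t - s)‖ ≤
        s ^ (μ - b) * T ^ (2 * δ) * Cconst μ δ
    ∧ (μ = 0 →
        ‖∫ t in Set.Ioc s T, t ^ (δ - b) • opPow L α (t - s)‖ ≤ s ^ (-b) * T ^ (2 * δ)) :=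
  operator_integral_estimate_general L hLsa hLpos α μ b δ hα0 hμ0 hμb hb1 hδ hδ0 s T hs hsT
end

section
/- Let H be a complex Hilbert space, let S be a bounded operator on H, and let D be a bounded self-adjoint operator on H with D ≥ 1 (that is, ⟨Dx, x⟩ ≥ ‖x‖² for all x ∈ H), so that D is invertible. Assume D S D^{-1} is bounded (automatic here). Then for each b with 0 ≤ b ≤ 1, the operator D^b S D^{-b} satisfies ‖D^b S D^{-b}‖ ≤ max(‖S‖, ‖D S D^{-1}‖), where D^b and D^{-b} are defined by the continuous functional calculus of D applied to λ ↦ λ^b and λ ↦ λ^{-b}. -/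
/-!
Put `L = log D` (self-adjoint) and `F z = exp (z L) S exp (-z L)`, an entire function with
`F 0 = S`, `F 1 = D S D⁻¹` and `F b = D^b S D^{-b}` for real `b`. Since the spectrum of `L` is
real, `‖exp (z L)‖ ≤ exp (|re z| ‖L‖)`; hence `F` is bounded on the strip `0 ≤ re z ≤ 1`, and
conjugating by `exp (i y L)` does not increase norms, so `‖F‖ ≤ ‖S‖` on `re z = 0` and
`‖F‖ ≤ ‖D S D⁻¹‖` on `re z = 1`. Hadamard's three lines theorem bounds `‖F b‖` by
`‖S‖^(1-b) ‖D S D⁻¹‖^b`.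
-/

open Complex.HadamardThreeLines

lemma NormedSpace.exp_add_smul {𝕂 𝔸 : Type*} [RCLike 𝕂] [NormedRing 𝔸] [NormedAlgebra 𝕂 𝔸]
    [CompleteSpace 𝔸] (x : 𝔸) (s t : 𝕂) : exp ((s + t) • x) = exp (s • x) * exp (t • x) := by
  have hball (y : 𝔸) : y ∈ Metric.eball 0 (expSeries 𝕂 𝔸).radius := by
    simp [expSeries_radius_eq_top]
  rw [add_smul, exp_add_of_commute_of_mem_ball (((Commute.refl x).smul_left s).smul_right t)
    (hball _) (hball _)]

section CStarAlgebra

variable {A : Type*} [CStarAlgebra A] {L : A}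

lemma IsSelfAdjoint.exp_smul_eq_cfc (hL : IsSelfAdjoint L) (z : ℂ) :
    NormedSpace.exp (z • L) = cfc (fun w : ℂ => Complex.exp (z * w)) L := by
  rw [← CFC.complex_exp_eq_normedSpace_exp (hL.isStarNormal.smul z),
    ← cfc_comp_smul z Complex.exp L]
  rfl

lemma IsSelfAdjoint.norm_exp_smul_le (hL : IsSelfAdjoint L) (z : ℂ) :
    ‖NormedSpace.exp (z • L)‖ ≤ Real.exp (|z.re| * ‖L‖) := by
  nontriviality A
  rw [hL.exp_smul_eq_cfc]
  refine norm_cfc_le (Real.exp_nonneg _) fun w hw => ?_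
  rw [Complex.norm_exp, Complex.mul_re, hL.im_eq_zero_of_mem_spectrum hw, mul_zero, sub_zero,
    Real.exp_le_exp]
  calc z.re * w.re ≤ |z.re| * |w.re| := by rw [← abs_mul]; exact le_abs_self _
    _ ≤ |z.re| * ‖L‖ := by
      gcongr; exact (Complex.abs_re_le_norm w).trans (spectrum.norm_le_norm_of_mem hw)

lemma IsSelfAdjoint.norm_exp_smul_mul_mul_exp_smul_neg_le (hL : IsSelfAdjoint L) (z : ℂ)
    (x : A) :
    ‖NormedSpace.exp (z • L) * x * NormedSpace.exp (z • -L)‖ ≤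
      Real.exp (2 * |z.re| * ‖L‖) * ‖x‖ := by
  calc _ ≤ ‖NormedSpace.exp (z • L)‖ * ‖x‖ * ‖NormedSpace.exp (z • -L)‖ := norm_mul₃_le
    _ ≤ Real.exp (|z.re| * ‖L‖) * ‖x‖ * Real.exp (|z.re| * ‖L‖) := by
      gcongr
      exacts [hL.norm_exp_smul_le z, norm_neg L ▸ hL.neg.norm_exp_smul_le z]
    _ = Real.exp (2 * |z.re| * ‖L‖) * ‖x‖ := by
      rw [mul_right_comm, ← Real.exp_add]
      ring_nf

theorem IsSelfAdjoint.norm_exp_smul_mul_mul_exp_neg_smul_le (hL : IsSelfAdjoint L) (s : A)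
    {t : ℝ} (ht₀ : 0 ≤ t) (ht₁ : t ≤ 1) :
    ‖NormedSpace.exp (t • L) * s * NormedSpace.exp (-t • L)‖ ≤
      max ‖s‖ ‖NormedSpace.exp L * s * NormedSpace.exp (-L)‖ := by
  set F : ℂ → A := fun z => NormedSpace.exp (z • L) * s * NormedSpace.exp (z • -L)
  have hF_edge (z w : ℂ) (hz : z.re = 0) : ‖F (z + w)‖ ≤ ‖F w‖ := by
    have hF_add : F (z + w) = NormedSpace.exp (z • L) * F w * NormedSpace.exp (z • -L) := by
      simp only [F]
      rw [NormedSpace.exp_add_smul, add_comm z w, NormedSpace.exp_add_smul]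
      simp only [mul_assoc]
    simpa [hF_add, hz] using hL.norm_exp_smul_mul_mul_exp_smul_neg_le z (F w)
  have hF_bdd : BddAbove ((norm ∘ F) '' verticalClosedStrip 0 1) := by
    refine ⟨Real.exp (2 * ‖L‖) * ‖s‖, ?_⟩
    rintro _ ⟨z, ⟨hz₀, hz₁⟩, rfl⟩
    have hz : |z.re| ≤ 1 := abs_le.mpr ⟨by linarith, hz₁⟩
    refine (hL.norm_exp_smul_mul_mul_exp_smul_neg_le z s).trans ?_
    gcongr
    nlinarith [norm_nonneg L]
  set M := max ‖s‖ ‖NormedSpace.exp L * s * NormedSpace.exp (-L)‖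
  have h₀ : ∀ z ∈ Complex.re ⁻¹' {0}, ‖F z‖ ≤ M := fun z hz => by
    have hF₀ : F 0 = s := by simp [F]
    calc ‖F z‖ = ‖F (z + 0)‖ := by rw [add_zero]
      _ ≤ ‖F 0‖ := hF_edge z 0 hz
      _ ≤ M := hF₀ ▸ le_max_left _ _
  have h₁ : ∀ z ∈ Complex.re ⁻¹' {1}, ‖F z‖ ≤ M := fun z hz => by
    have hF₁ : F 1 = NormedSpace.exp L * s * NormedSpace.exp (-L) := by simp [F]
    have hz' : (z - 1).re = 0 := by simpa [sub_eq_zero] using hz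
    calc ‖F z‖ = ‖F (z - 1 + 1)‖ := by rw [sub_add_cancel]
      _ ≤ ‖F 1‖ := hF_edge (z - 1) 1 hz'
      _ ≤ M := hF₁ ▸ le_max_right _ _
  have hF_diff : Differentiable ℂ F := by fun_prop
  have hFt : F t = NormedSpace.exp (t • L) * s * NormedSpace.exp (-t • L) := by
    simp only [F, Complex.coe_smul, smul_neg, neg_smul]
  have hM : 0 ≤ M := (norm_nonneg s).trans (le_max_left _ _)
  calc _ = ‖F t‖ := by rw [hFt]
    _ ≤ M ^ (1 - t) * M ^ t := by
        simpa using norm_le_interp_of_mem_verticalClosedStrip₀₁' F (z := t) ⟨by simpa, by simpa⟩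
          hF_diff.diffContOnCl hF_bdd h₀ h₁
    _ = M := by rw [← Real.rpow_add' hM (by norm_num), sub_add_cancel, Real.rpow_one]

variable [PartialOrder A] [StarOrderedRing A] {a : A}

lemma IsStrictlyPositive.exp_smul_log (ha : IsStrictlyPositive a) (t : ℝ) :
    NormedSpace.exp (t • CFC.log a) = cfc (fun x : ℝ => x ^ t) a := by
  have hlog : ContinuousOn Real.log (spectrum ℝ a) :=
    Real.continuousOn_log.mono fun x hx => (ha.spectrum_pos hx).ne'
  rw [CFC.log, ← cfc_smul t Real.log a, ← CFC.real_exp_eq_normedSpace_exp (cfc_predicate _ a),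
    ← cfc_comp' Real.exp (fun x => t • Real.log x) a (hf := hlog.const_smul t)]
  refine cfc_congr fun x hx => ?_
  rw [Real.rpow_def_of_pos (ha.spectrum_pos hx), smul_eq_mul, mul_comm]

theorem IsStrictlyPositive.norm_cfc_rpow_mul_mul_cfc_rpow_neg_le (ha : IsStrictlyPositive a)
    (s : A) {t : ℝ} (ht₀ : 0 ≤ t) (ht₁ : t ≤ 1) :
    ‖cfc (fun x : ℝ => x ^ t) a * s * cfc (fun x : ℝ => x ^ (-t)) a‖ ≤
      max ‖s‖ ‖a * s * cfc (fun x : ℝ => x ^ (-1 : ℝ)) a‖ := by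
  have hexp_neg : NormedSpace.exp (-CFC.log a) = cfc (fun x : ℝ => x ^ (-1 : ℝ)) a := by
    simpa using ha.exp_smul_log (-1)
  simpa only [ha.exp_smul_log, CFC.exp_log a, hexp_neg] using
    (IsSelfAdjoint.log (a := a)).norm_exp_smul_mul_mul_exp_neg_smul_le s ht₀ ht₁

end CStarAlgebra

lemma ContinuousLinearMap.one_le_of_norm_sq_le_re_inner {𝕜 E : Type*} [RCLike 𝕜]
    [NormedAddCommGroup E] [InnerProductSpace 𝕜 E] [CompleteSpace E] {T : E →L[𝕜] E}
    (hT : IsSelfAdjoint T) (h : ∀ x, ‖x‖ ^ 2 ≤ RCLike.re (inner 𝕜 (T x) x)) : 1 ≤ T := by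
  rw [le_def, isPositive_def']
  refine ⟨hT.sub (.one _), fun x => ?_⟩
  simpa [reApplyInnerSelf_apply, inner_sub_left, inner_self_eq_norm_sq] using h x

/-- Complex interpolation (Lemma 7.6): if `S` is a bounded operator on a complex Hilbert
space and `D` is a bounded self-adjoint operator with `D ≥ 1`, then for `0 ≤ b ≤ 1`,
`‖D^b S D^{-b}‖ ≤ max (‖S‖, ‖D S D^{-1}‖)`, where `D^b`, `D^{-b}` and `D^{-1}` are
defined by the continuous functional calculus of `D`. -/
theorem complex_interpolation
    {H : Type*} [NormedAddCommGroup H] [InnerProductSpace ℂ H] [CompleteSpace H]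
    (S D : H →L[ℂ] H) (hD : IsSelfAdjoint D)
    (hD1 : ∀ x : H, ‖x‖ ^ 2 ≤ (inner ℂ (D x) x : ℂ).re)
    (b : ℝ) (hb0 : 0 ≤ b) (hb1 : b ≤ 1) :
    ‖cfc (fun lam : ℝ => lam ^ b) D ∘L S ∘L cfc (fun lam : ℝ => lam ^ (-b)) D‖ ≤
      max ‖S‖ ‖D ∘L S ∘L cfc (fun lam : ℝ => lam ^ (-1 : ℝ)) D‖ := by
  have hD_pos : IsStrictlyPositive D :=
    isStrictlyPositive_one.of_le (ContinuousLinearMap.one_le_of_norm_sq_le_re_inner hD hD1)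
  simpa only [ContinuousLinearMap.mul_def, ContinuousLinearMap.comp_assoc] using
    hD_pos.norm_cfc_rpow_mul_mul_cfc_rpow_neg_le S hb0 hb1
end

section
/- Suppose f, g, h are non-negative continuous functions on (0,t] with f differentiable, and (d/ds) f(s) + g(s) ≤ h(s) for all 0 < s ≤ t. Let b < 1 be a real number and assume ∫₀ᵗ s^{-b} f(s) ds < ∞. Then t^{1-b} f(t) + ∫₀ᵗ s^{1-b} g(s) ds ≤ ∫₀ᵗ s^{1-b} h(s) ds + (1-b) ∫₀ᵗ s^{-b} f(s) ds, the integrals being interpreted in [0,∞]; moreover if equality holds in the differential inequality on (0,t] then equality holds in the conclusion. -/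
open MeasureTheory Set Filter Topology

/-!
For `F s = s ^ (1 - b) * f s` the differential inequality reads
`F' ≤ s ^ (1 - b) * (h - g) + (1 - b) * s ^ (-b) * f`, so integrating over `[ε, t]` gives
`F t + ∫_ε^t s^(1-b) g ≤ F ε + ∫_ε^t s^(1-b) h + (1-b) ∫_ε^t s^(-b) f`, with equality when
`f' + g = h`. As `ε → 0⁺` the integrals converge to those over `(0, t]`. The boundary term
`F ε` need not tend to `0`, but it is small for arbitrarily small `ε`: otherwise
`s ^ (-b) * f s = F s / s ≥ c / s` near `0`, contradicting integrability. In the equality case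
the reverse inequality only needs `F ε ≥ 0`.
-/

lemma frequently_mul_norm_lt_of_integrableOn {φ : ℝ → ℝ} {t c : ℝ} (ht : 0 < t) (hc : 0 < c)
    (hφ : IntegrableOn φ (Ioc 0 t)) : ∃ᶠ s in 𝓝[>] 0, s * ‖φ s‖ < c := by
  intro hge
  obtain ⟨u, hu, hsub⟩ := mem_nhdsGT_iff_exists_Ioo_subset.1 hge
  set δ := min u t
  have hδ : 0 < δ := lt_min hu ht
  have hinv : IntegrableOn (fun s : ℝ => s ^ (-1 : ℝ)) (Ioo 0 δ) := by
    refine Integrable.mono' ((hφ.mono_set ?_).norm.const_mul c⁻¹)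
      (measurable_id.pow_const _).aestronglyMeasurable ?_
    · exact Ioo_subset_Ioc_self.trans (Ioc_subset_Ioc_right (min_le_right _ _))
    filter_upwards [ae_restrict_mem measurableSet_Ioo] with s hs
    have hcs : c ≤ s * ‖φ s‖ := not_lt.1 (hsub ⟨hs.1, hs.2.trans_le (min_le_left _ _)⟩)
    rw [Real.rpow_neg_one, norm_inv, Real.norm_of_nonneg hs.1.le, le_inv_mul_iff₀ hc,
      ← div_eq_mul_inv, div_le_iff₀ hs.1]
    linarith
  exact (intervalIntegral.integrableOn_Ioo_rpow_iff hδ).not.2 (lt_irrefl _) hinv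

lemma eventually_restrict_Ioc_restrict_Ioc (a t : ℝ) :
    ∀ᶠ ε in 𝓝[>] a, (volume.restrict (Ioc a t)).restrict (Ioc ε t) = volume.restrict (Ioc ε t) := by
  filter_upwards [self_mem_nhdsWithin] with ε hε
  rw [Measure.restrict_restrict measurableSet_Ioc,
    inter_eq_self_of_subset_left (Ioc_subset_Ioc_left (le_of_lt hε))]

lemma aecover_Ioc_nhdsGT (a t : ℝ) :
    AECover (volume.restrict (Ioc a t)) (𝓝[>] a) fun ε => Ioc ε t :=
  aecover_Ioc_of_Ioc nhdsWithin_le_nhds tendsto_const_nhds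

lemma tendsto_setLIntegral_Ioc_nhdsGT {a t : ℝ} {φ : ℝ → ENNReal}
    (hφ : AEMeasurable φ (volume.restrict (Ioc a t))) :
    Tendsto (fun ε => ∫⁻ s in Ioc ε t, φ s) (𝓝[>] a) (𝓝 (∫⁻ s in Ioc a t, φ s)) := by
  refine ((aecover_Ioc_nhdsGT a t).lintegral_tendsto_of_countably_generated hφ).congr' ?_
  filter_upwards [eventually_restrict_Ioc_restrict_Ioc a t] with ε hε
  rw [hε]

lemma tendsto_setIntegral_Ioc_nhdsGT {E : Type*} [NormedAddCommGroup E] [NormedSpace ℝ E]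
    {a t : ℝ} {φ : ℝ → E} (hφ : IntegrableOn φ (Ioc a t)) :
    Tendsto (fun ε => ∫ s in Ioc ε t, φ s) (𝓝[>] a) (𝓝 (∫ s in Ioc a t, φ s)) := by
  refine ((aecover_Ioc_nhdsGT a t).integral_tendsto_of_countably_generated hφ).congr' ?_
  filter_upwards [eventually_restrict_Ioc_restrict_Ioc a t] with ε hε
  rw [hε]

lemma ContinuousOn.rpow_const_mul {q : ℝ} {φ : ℝ → ℝ} {S : Set ℝ} (hφ : ContinuousOn φ S)
    (hS : ∀ x ∈ S, x ≠ 0) : ContinuousOn (fun x => x ^ q * φ x) S :=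
  (continuousOn_id.rpow_const fun x hx => .inl (hS x hx)).mul hφ

lemma integrableOn_Ioc_rpow_const_mul {q ε t : ℝ} {φ : ℝ → ℝ} (hε : 0 < ε)
    (hφ : ContinuousOn φ (Icc ε t)) : IntegrableOn (fun x => x ^ q * φ x) (Ioc ε t) :=
  (hφ.rpow_const_mul fun _ hx => (hε.trans_le hx.1).ne').integrableOn_Icc.mono_set
    Ioc_subset_Icc_self

lemma setIntegral_Ioc_rpow_const_mul_nonneg {q ε t : ℝ} {φ : ℝ → ℝ} (hε : 0 ≤ ε)
    (hφ0 : ∀ s ∈ Ioc ε t, 0 ≤ φ s) : 0 ≤ ∫ s in Ioc ε t, s ^ q * φ s :=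
  setIntegral_nonneg measurableSet_Ioc fun s hs => by
    have := hφ0 s hs
    have := hε.trans_lt hs.1
    positivity

lemma lintegral_Ioc_ofReal_rpow_const_mul {q ε t : ℝ} {φ : ℝ → ℝ} (hε : 0 < ε)
    (hφ : ContinuousOn φ (Icc ε t)) (hφ0 : ∀ s ∈ Ioc ε t, 0 ≤ φ s) :
    ∫⁻ s in Ioc ε t, ENNReal.ofReal (s ^ q * φ s) =
      ENNReal.ofReal (∫ s in Ioc ε t, s ^ q * φ s) := by
  refine (ofReal_integral_eq_lintegral_ofReal (integrableOn_Ioc_rpow_const_mul hε hφ) ?_).symm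
  filter_upwards [ae_restrict_mem measurableSet_Ioc] with s hs
  have := hφ0 s hs
  have := hε.trans hs.1
  positivity

lemma tendsto_lintegral_Ioc_ofReal_rpow_const_mul {q t : ℝ} {φ : ℝ → ℝ}
    (hφ : ContinuousOn φ (Ioc 0 t)) :
    Tendsto (fun ε => ∫⁻ s in Ioc ε t, ENNReal.ofReal (s ^ q * φ s)) (𝓝[>] 0)
      (𝓝 (∫⁻ s in Ioc 0 t, ENNReal.ofReal (s ^ q * φ s))) :=
  tendsto_setLIntegral_Ioc_nhdsGT <| ENNReal.measurable_ofReal.comp_aemeasurable <|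
    (hφ.rpow_const_mul fun _ hs => hs.1.ne').aemeasurable measurableSet_Ioc

lemma hasDerivAt_rpow_one_sub_mul {b x y : ℝ} {f : ℝ → ℝ} (hx : 0 < x) (hf : HasDerivAt f y x) :
    HasDerivAt (fun s => s ^ (1 - b) * f s) (x ^ (1 - b) * y + (1 - b) * (x ^ (-b) * f x)) x := by
  have hr := Real.hasDerivAt_rpow_const (p := 1 - b) (Or.inl hx.ne')
  rw [sub_sub_cancel_left] at hr
  exact (hr.fun_mul hf).congr_deriv (by ring)

section DifferentialInequality

variable {b ε t : ℝ} {f f' g h : ℝ → ℝ}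

lemma setIntegral_Ioc_rpow_mul_sub_add (hε : 0 < ε) (hfc : ContinuousOn f (Icc ε t))
    (hgc : ContinuousOn g (Icc ε t)) (hhc : ContinuousOn h (Icc ε t)) :
    ∫ s in Ioc ε t, (s ^ (1 - b) * (h s - g s) + (1 - b) * (s ^ (-b) * f s)) =
      (∫ s in Ioc ε t, s ^ (1 - b) * h s) - (∫ s in Ioc ε t, s ^ (1 - b) * g s)
        + (1 - b) * ∫ s in Ioc ε t, s ^ (-b) * f s := by
  have hF := integrableOn_Ioc_rpow_const_mul (q := -b) hε hfc
  have hG := integrableOn_Ioc_rpow_const_mul (q := 1 - b) hε hgc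
  have hH := integrableOn_Ioc_rpow_const_mul (q := 1 - b) hε hhc
  simp_rw [mul_sub]
  rw [integral_add ?_ (hF.const_mul _), integral_sub hH hG, integral_const_mul]
  exact hH.sub hG

lemma rpow_mul_add_setIntegral_le (hε : 0 < ε) (hεt : ε ≤ t) (hfc : ContinuousOn f (Icc ε t))
    (hgc : ContinuousOn g (Icc ε t)) (hhc : ContinuousOn h (Icc ε t))
    (hderiv : ∀ x ∈ Ioo ε t, HasDerivAt f (f' x) x) (hineq : ∀ x ∈ Ioo ε t, f' x + g x ≤ h x) :
    t ^ (1 - b) * f t + ∫ s in Ioc ε t, s ^ (1 - b) * g s ≤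
      ε ^ (1 - b) * f ε + (∫ s in Ioc ε t, s ^ (1 - b) * h s)
        + (1 - b) * ∫ s in Ioc ε t, s ^ (-b) * f s := by
  have hpos : ∀ x ∈ Icc ε t, x ≠ 0 := fun x hx => (hε.trans_le hx.1).ne'
  have hψ : ContinuousOn (fun s => s ^ (1 - b) * (h s - g s) + (1 - b) * (s ^ (-b) * f s))
      (Icc ε t) :=
    ((hhc.sub hgc).rpow_const_mul hpos).add (continuousOn_const.mul (hfc.rpow_const_mul hpos))
  have key := intervalIntegral.sub_le_integral_of_hasDeriv_right_of_le hεt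
    (hfc.rpow_const_mul hpos)
    (fun x hx => (hasDerivAt_rpow_one_sub_mul (hε.trans hx.1) (hderiv x hx)).hasDerivWithinAt)
    hψ.integrableOn_Icc
    (fun x hx => add_le_add_left (mul_le_mul_of_nonneg_left (by linarith [hineq x hx])
      (Real.rpow_nonneg (hε.trans hx.1).le _)) _)
  rw [intervalIntegral.integral_of_le hεt, setIntegral_Ioc_rpow_mul_sub_add hε hfc hgc hhc] at key
  linarith

lemma rpow_mul_add_setIntegral_eq (hε : 0 < ε) (hεt : ε ≤ t) (hfc : ContinuousOn f (Icc ε t))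
    (hgc : ContinuousOn g (Icc ε t)) (hhc : ContinuousOn h (Icc ε t))
    (hderiv : ∀ x ∈ Ioo ε t, HasDerivAt f (f' x) x) (heq : ∀ x ∈ Ioo ε t, f' x + g x = h x) :
    t ^ (1 - b) * f t + ∫ s in Ioc ε t, s ^ (1 - b) * g s =
      ε ^ (1 - b) * f ε + (∫ s in Ioc ε t, s ^ (1 - b) * h s)
        + (1 - b) * ∫ s in Ioc ε t, s ^ (-b) * f s := by
  have hle := rpow_mul_add_setIntegral_le (b := b) hε hεt hfc hgc hhc hderiv
    fun x hx => (heq x hx).le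
  -- `-f` satisfies the same differential inequality with the roles of `g` and `h` exchanged.
  have hge := rpow_mul_add_setIntegral_le (b := b) hε hεt hfc.neg hhc hgc
    (fun x hx => (hderiv x hx).neg) fun x hx => by linarith [heq x hx]
  simp only [Pi.neg_apply, mul_neg, integral_neg] at hge
  linarith

lemma frequently_rpow_one_sub_mul_lt {c : ℝ} (ht : 0 < t) (hc : 0 < c)
    (hf0 : ∀ s ∈ Ioc 0 t, 0 ≤ f s) (hint : IntegrableOn (fun s => s ^ (-b) * f s) (Ioc 0 t)) :
    ∃ᶠ ε in 𝓝[>] 0, ε ^ (1 - b) * f ε < c := by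
  refine (frequently_mul_norm_lt_of_integrableOn ht hc hint).mp ?_
  filter_upwards [Ioo_mem_nhdsGT ht] with ε hε hεc
  have := hf0 ε (Ioo_subset_Ioc_self hε)
  have := hε.1
  rw [Real.norm_of_nonneg (by positivity)] at hεc
  rwa [sub_eq_add_neg, Real.rpow_add hε.1, Real.rpow_one, mul_assoc]

lemma ofReal_rpow_mul_add_lintegral_le (hε : 0 < ε) (hεt : ε ≤ t)
    (hf0 : ∀ s ∈ Ioc 0 t, 0 ≤ f s) (hg0 : ∀ s ∈ Ioc 0 t, 0 ≤ g s)
    (hh0 : ∀ s ∈ Ioc 0 t, 0 ≤ h s) (hfc : ContinuousOn f (Ioc 0 t))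
    (hgc : ContinuousOn g (Ioc 0 t)) (hhc : ContinuousOn h (Ioc 0 t))
    (hderiv : ∀ x ∈ Ioo 0 t, HasDerivAt f (f' x) x) (hineq : ∀ x ∈ Ioo 0 t, f' x + g x ≤ h x) :
    ENNReal.ofReal (t ^ (1 - b) * f t) + ∫⁻ s in Ioc ε t, ENNReal.ofReal (s ^ (1 - b) * g s) ≤
      ENNReal.ofReal (ε ^ (1 - b) * f ε) + (∫⁻ s in Ioc ε t, ENNReal.ofReal (s ^ (1 - b) * h s))
        + ENNReal.ofReal ((1 - b) * ∫ s in Ioc ε t, s ^ (-b) * f s) := by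
  have hsub : Icc ε t ⊆ Ioc 0 t := Icc_subset_Ioc hε le_rfl
  have hIoc : Ioc ε t ⊆ Ioc 0 t := Ioc_subset_Ioc_left hε.le
  have hIoo : Ioo ε t ⊆ Ioo 0 t := Ioo_subset_Ioo_left hε.le
  have ht := hε.trans_le hεt
  have hft := hf0 t ⟨ht, le_rfl⟩
  rw [lintegral_Ioc_ofReal_rpow_const_mul hε (hgc.mono hsub) fun s hs => hg0 s (hIoc hs),
    lintegral_Ioc_ofReal_rpow_const_mul hε (hhc.mono hsub) fun s hs => hh0 s (hIoc hs),
    ← ENNReal.ofReal_add (by positivity) (setIntegral_Ioc_rpow_const_mul_nonneg hε.le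
      fun s hs => hg0 s (hIoc hs))]
  refine (ENNReal.ofReal_le_ofReal ?_).trans
    (ENNReal.ofReal_add_le.trans (add_le_add_left ENNReal.ofReal_add_le _))
  exact rpow_mul_add_setIntegral_le hε hεt (hfc.mono hsub) (hgc.mono hsub) (hhc.mono hsub)
    (fun x hx => hderiv x (hIoo hx)) fun x hx => hineq x (hIoo hx)

lemma ofReal_rpow_mul_add_lintegral_eq (hb : b ≤ 1) (hε : 0 < ε) (hεt : ε ≤ t)
    (hf0 : ∀ s ∈ Ioc 0 t, 0 ≤ f s) (hg0 : ∀ s ∈ Ioc 0 t, 0 ≤ g s)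
    (hh0 : ∀ s ∈ Ioc 0 t, 0 ≤ h s) (hfc : ContinuousOn f (Ioc 0 t))
    (hgc : ContinuousOn g (Ioc 0 t)) (hhc : ContinuousOn h (Ioc 0 t))
    (hderiv : ∀ x ∈ Ioo 0 t, HasDerivAt f (f' x) x) (heq : ∀ x ∈ Ioo 0 t, f' x + g x = h x) :
    ENNReal.ofReal (t ^ (1 - b) * f t) + ∫⁻ s in Ioc ε t, ENNReal.ofReal (s ^ (1 - b) * g s) =
      ENNReal.ofReal (ε ^ (1 - b) * f ε) + (∫⁻ s in Ioc ε t, ENNReal.ofReal (s ^ (1 - b) * h s))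
        + ENNReal.ofReal ((1 - b) * ∫ s in Ioc ε t, s ^ (-b) * f s) := by
  have hsub : Icc ε t ⊆ Ioc 0 t := Icc_subset_Ioc hε le_rfl
  have hIoc : Ioc ε t ⊆ Ioc 0 t := Ioc_subset_Ioc_left hε.le
  have hIoo : Ioo ε t ⊆ Ioo 0 t := Ioo_subset_Ioo_left hε.le
  have ht := hε.trans_le hεt
  have hft := hf0 t ⟨ht, le_rfl⟩
  have hfε := hf0 ε ⟨hε, hεt⟩
  have hG := setIntegral_Ioc_rpow_const_mul_nonneg (q := 1 - b) hε.le fun s hs => hg0 s (hIoc hs)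
  have hH := setIntegral_Ioc_rpow_const_mul_nonneg (q := 1 - b) hε.le fun s hs => hh0 s (hIoc hs)
  have hF := setIntegral_Ioc_rpow_const_mul_nonneg (q := -b) hε.le fun s hs => hf0 s (hIoc hs)
  have hb' : 0 ≤ 1 - b := sub_nonneg.2 hb
  rw [lintegral_Ioc_ofReal_rpow_const_mul hε (hgc.mono hsub) fun s hs => hg0 s (hIoc hs),
    lintegral_Ioc_ofReal_rpow_const_mul hε (hhc.mono hsub) fun s hs => hh0 s (hIoc hs),
    ← ENNReal.ofReal_add (by positivity) hG, ← ENNReal.ofReal_add (by positivity) hH,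
    ← ENNReal.ofReal_add (by positivity) (by positivity)]
  exact congrArg ENNReal.ofReal <| rpow_mul_add_setIntegral_eq hε hεt (hfc.mono hsub)
    (hgc.mono hsub) (hhc.mono hsub) (fun x hx => hderiv x (hIoo hx)) fun x hx => heq x (hIoo hx)

lemma ofReal_rpow_mul_add_lintegral_zero_le (ht : 0 < t) (hb : b ≤ 1)
    (hf0 : ∀ s ∈ Ioc 0 t, 0 ≤ f s) (hg0 : ∀ s ∈ Ioc 0 t, 0 ≤ g s)
    (hh0 : ∀ s ∈ Ioc 0 t, 0 ≤ h s) (hfc : ContinuousOn f (Ioc 0 t))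
    (hgc : ContinuousOn g (Ioc 0 t)) (hhc : ContinuousOn h (Ioc 0 t))
    (hderiv : ∀ x ∈ Ioo 0 t, HasDerivAt f (f' x) x) (hineq : ∀ x ∈ Ioo 0 t, f' x + g x ≤ h x)
    (hint : IntegrableOn (fun s => s ^ (-b) * f s) (Ioc 0 t)) :
    ENNReal.ofReal (t ^ (1 - b) * f t) + ∫⁻ s in Ioc 0 t, ENNReal.ofReal (s ^ (1 - b) * g s) ≤
      (∫⁻ s in Ioc 0 t, ENNReal.ofReal (s ^ (1 - b) * h s))
        + ENNReal.ofReal ((1 - b) * ∫ s in Ioc 0 t, s ^ (-b) * f s) := by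
  refine ENNReal.le_of_forall_pos_le_add fun c hc _ => le_of_tendsto_of_frequently
    ((tendsto_lintegral_Ioc_ofReal_rpow_const_mul hgc).const_add _) ?_
  refine ((frequently_rpow_one_sub_mul_lt ht hc hf0 hint).and_eventually
    (Ioo_mem_nhdsGT ht)).mono fun ε ⟨hεc, hε⟩ => ?_
  calc _ ≤ ENNReal.ofReal (ε ^ (1 - b) * f ε)
          + (∫⁻ s in Ioc ε t, ENNReal.ofReal (s ^ (1 - b) * h s))
          + ENNReal.ofReal ((1 - b) * ∫ s in Ioc ε t, s ^ (-b) * f s) :=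
        ofReal_rpow_mul_add_lintegral_le hε.1 hε.2.le hf0 hg0 hh0 hfc hgc hhc hderiv hineq
    _ ≤ c + (∫⁻ s in Ioc 0 t, ENNReal.ofReal (s ^ (1 - b) * h s))
          + ENNReal.ofReal ((1 - b) * ∫ s in Ioc 0 t, s ^ (-b) * f s) := by
        have := sub_nonneg.2 hb
        gcongr
        · exact (ENNReal.ofReal_le_ofReal hεc.le).trans_eq ENNReal.ofReal_coe_nnreal
        · exact hε.1.le
        · filter_upwards [ae_restrict_mem measurableSet_Ioc] with s hs
          have := hf0 s hs
          have := hs.1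
          positivity
        · exact hε.1.le
    _ = _ := by ring

lemma lintegral_add_ofReal_le_ofReal_rpow_mul_add_lintegral (ht : 0 < t) (hb : b ≤ 1)
    (hf0 : ∀ s ∈ Ioc 0 t, 0 ≤ f s) (hg0 : ∀ s ∈ Ioc 0 t, 0 ≤ g s)
    (hh0 : ∀ s ∈ Ioc 0 t, 0 ≤ h s) (hfc : ContinuousOn f (Ioc 0 t))
    (hgc : ContinuousOn g (Ioc 0 t)) (hhc : ContinuousOn h (Ioc 0 t))
    (hderiv : ∀ x ∈ Ioo 0 t, HasDerivAt f (f' x) x) (heq : ∀ x ∈ Ioo 0 t, f' x + g x = h x)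
    (hint : IntegrableOn (fun s => s ^ (-b) * f s) (Ioc 0 t)) :
    (∫⁻ s in Ioc 0 t, ENNReal.ofReal (s ^ (1 - b) * h s))
        + ENNReal.ofReal ((1 - b) * ∫ s in Ioc 0 t, s ^ (-b) * f s) ≤
      ENNReal.ofReal (t ^ (1 - b) * f t) + ∫⁻ s in Ioc 0 t, ENNReal.ofReal (s ^ (1 - b) * g s) := by
  refine le_of_tendsto ((tendsto_lintegral_Ioc_ofReal_rpow_const_mul hhc).add
    (ENNReal.tendsto_ofReal ((tendsto_setIntegral_Ioc_nhdsGT hint).const_mul _))) ?_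
  filter_upwards [Ioo_mem_nhdsGT ht] with ε hε
  calc _ ≤ ENNReal.ofReal (ε ^ (1 - b) * f ε)
          + (∫⁻ s in Ioc ε t, ENNReal.ofReal (s ^ (1 - b) * h s))
          + ENNReal.ofReal ((1 - b) * ∫ s in Ioc ε t, s ^ (-b) * f s) := by
        rw [add_assoc]
        exact le_add_self
    _ = ENNReal.ofReal (t ^ (1 - b) * f t)
          + ∫⁻ s in Ioc ε t, ENNReal.ofReal (s ^ (1 - b) * g s) :=
        (ofReal_rpow_mul_add_lintegral_eq hb hε.1 hε.2.le hf0 hg0 hh0 hfc hgc hhc hderiv heq).symm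
    _ ≤ _ := by
        gcongr
        exact hε.1.le

end DifferentialInequality

/-- Lemma 4.7 (initial behavior from differential inequalities): if `f, g, h ≥ 0` are
continuous on `(0,t]`, `f` is differentiable with derivative `f'` satisfying
`f' + g ≤ h` on `(0,t]`, `b < 1` and `∫₀ᵗ s^{-b} f(s) ds < ∞`, then
`t^{1-b} f(t) + ∫₀ᵗ s^{1-b} g(s) ds ≤ ∫₀ᵗ s^{1-b} h(s) ds + (1-b) ∫₀ᵗ s^{-b} f(s) ds`,
the `g`- and `h`-integrals being interpreted in `[0,∞]`; with equality if `f' + g = h`. -/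
theorem initial_behavior_from_differential_inequality
    (t : ℝ) (ht : 0 < t) (f g h f' : ℝ → ℝ)
    (hf0 : ∀ s ∈ Set.Ioc (0:ℝ) t, 0 ≤ f s)
    (hg0 : ∀ s ∈ Set.Ioc (0:ℝ) t, 0 ≤ g s)
    (hh0 : ∀ s ∈ Set.Ioc (0:ℝ) t, 0 ≤ h s)
    (hfc : ContinuousOn f (Set.Ioc 0 t))
    (hgc : ContinuousOn g (Set.Ioc 0 t))
    (hhc : ContinuousOn h (Set.Ioc 0 t))
    (hderiv : ∀ s ∈ Set.Ioc (0:ℝ) t, HasDerivWithinAt f (f' s) (Set.Ioc 0 t) s)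
    (hineq : ∀ s ∈ Set.Ioc (0:ℝ) t, f' s + g s ≤ h s)
    (b : ℝ) (hb : b < 1)
    (hint : IntegrableOn (fun s => s ^ (-b) * f s) (Set.Ioc 0 t)) :
    (ENNReal.ofReal (t ^ (1 - b) * f t)
        + ∫⁻ s in Set.Ioc (0:ℝ) t, ENNReal.ofReal (s ^ (1 - b) * g s) ≤
      (∫⁻ s in Set.Ioc (0:ℝ) t, ENNReal.ofReal (s ^ (1 - b) * h s))
        + ENNReal.ofReal ((1 - b) * ∫ s in Set.Ioc (0:ℝ) t, s ^ (-b) * f s))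
    ∧ ((∀ s ∈ Set.Ioc (0:ℝ) t, f' s + g s = h s) →
      ENNReal.ofReal (t ^ (1 - b) * f t)
          + ∫⁻ s in Set.Ioc (0:ℝ) t, ENNReal.ofReal (s ^ (1 - b) * g s) =
        (∫⁻ s in Set.Ioc (0:ℝ) t, ENNReal.ofReal (s ^ (1 - b) * h s))
          + ENNReal.ofReal ((1 - b) * ∫ s in Set.Ioc (0:ℝ) t, s ^ (-b) * f s)) := by
  have hd : ∀ x ∈ Ioo 0 t, HasDerivAt f (f' x) x := fun x hx =>
    (hderiv x (Ioo_subset_Ioc_self hx)).hasDerivAt (Ioc_mem_nhds hx.1 hx.2)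
  have hle := ofReal_rpow_mul_add_lintegral_zero_le ht hb.le hf0 hg0 hh0 hfc hgc hhc hd
    (fun x hx => hineq x (Ioo_subset_Ioc_self hx)) hint
  refine ⟨hle, fun heq => le_antisymm hle ?_⟩
  exact lintegral_add_ofReal_le_ofReal_rpow_mul_add_lintegral ht hb.le hf0 hg0 hh0 hfc hgc hhc
    hd (fun x hx => heq x (Ioo_subset_Ioc_self hx)) hint
end

section
/- Let 0 ≤ c < 1 and 0 < T < ∞. Suppose α and β are non-negative measurable functions on (0,T] such that α(t) ≤ (1/t) ∫₀ᵗ (t-s)^{-c} β(s) ds for all 0 < t ≤ T. Then for any real number b < 2c + 1 there is a constant γ, depending only on b and c, such that ∫₀ᵀ t^b α(t)² dt ≤ γ ∫₀ᵀ s^{b-2c} β(s)² ds, the integrals being interpreted in [0,∞]. -/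
/-!
With `I(t) = ∫₀ᵗ (t-s)^{-c} β(s) ds` one has `t^b α(t)² ≤ t^{b-2} I(t)²`. Cauchy–Schwarz with the
weight `s^d` bounds `I(t)²` by `∫₀ᵗ (t-s)^{-c} s^d ds · ∫₀ᵗ (t-s)^{-c} s^{-d} β(s)² ds`, and the
first factor is `O(t^{1-c+d})` as soon as `d > -1`. Integrating in `t` and exchanging the order of
integration leaves, for each `s`, the kernel `∫ₛ^∞ t^e (t-s)^{-c} dt = O(s^{e-c+1})` with
`e = b-1-c+d`, finite as soon as `e - c < -1`. A `d` meeting both conditions exists exactly when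
`b < 2c+1`, and the powers of `s` then combine to `s^{b-2c}`.
-/

open MeasureTheory Set ENNReal

theorem lintegral_Ioc_zero_rpow {r a : ℝ} (hr : -1 < r) (ha : 0 ≤ a) :
    ∫⁻ x in Ioc 0 a, ENNReal.ofReal (x ^ r) = ENNReal.ofReal (a ^ (r + 1) / (r + 1)) := by
  rw [← ofReal_integral_eq_lintegral_ofReal (intervalIntegral.intervalIntegrable_rpow' hr).1
    (ae_restrict_of_forall_mem measurableSet_Ioc fun x hx => Real.rpow_nonneg hx.1.le _),
    ← intervalIntegral.integral_of_le ha, integral_rpow (Or.inl hr),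
    Real.zero_rpow (by linarith), sub_zero]

theorem lintegral_Ioc_sub_rpow {r s u : ℝ} (hr : -1 < r) (hsu : s ≤ u) :
    ∫⁻ t in Ioc s u, ENNReal.ofReal ((t - s) ^ r) =
      ENNReal.ofReal ((u - s) ^ (r + 1) / (r + 1)) := by
  have hi : IntervalIntegrable (fun t : ℝ => (t - s) ^ r) volume s u := by
    simpa using
      (intervalIntegral.intervalIntegrable_rpow' (a := 0) (b := u - s) hr).comp_sub_right s
  rw [← ofReal_integral_eq_lintegral_ofReal hi.1
    (ae_restrict_of_forall_mem measurableSet_Ioc fun t ht =>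
      Real.rpow_nonneg (by linarith [ht.1]) _),
    ← intervalIntegral.integral_of_le hsu,
    intervalIntegral.integral_comp_sub_right (· ^ r), sub_self, integral_rpow (Or.inl hr),
    Real.zero_rpow (by linarith), sub_zero]

theorem lintegral_Ioc_rsub_rpow {r a t : ℝ} (hr : -1 < r) (hat : a ≤ t) :
    ∫⁻ x in Ioc a t, ENNReal.ofReal ((t - x) ^ r) =
      ENNReal.ofReal ((t - a) ^ (r + 1) / (r + 1)) := by
  have hi : IntervalIntegrable (fun x : ℝ => (t - x) ^ r) volume a t := by
    simpa using
      ((intervalIntegral.intervalIntegrable_rpow' (a := 0) (b := t - a) hr).comp_sub_left t).symm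
  rw [← ofReal_integral_eq_lintegral_ofReal hi.1
    (ae_restrict_of_forall_mem measurableSet_Ioc fun x hx =>
      Real.rpow_nonneg (by linarith [hx.2]) _),
    ← intervalIntegral.integral_of_le hat,
    intervalIntegral.integral_comp_sub_left (· ^ r), sub_self, integral_rpow (Or.inl hr),
    Real.zero_rpow (by linarith), sub_zero]

theorem rpow_le_rpow_add_rpow_of_mem_Icc {a x y : ℝ} (ha : 0 < a) (hx : x ∈ Icc a y) (r : ℝ) :
    x ^ r ≤ a ^ r + y ^ r := by
  have hy : 0 < y := ha.trans_le (hx.1.trans hx.2)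
  rcases le_total 0 r with hr | hr
  · exact (Real.rpow_le_rpow (ha.le.trans hx.1) hx.2 hr).trans
      (le_add_of_nonneg_left (Real.rpow_nonneg ha.le r))
  · exact (Real.rpow_le_rpow_of_nonpos ha hx.1 hr).trans
      (le_add_of_nonneg_right (Real.rpow_nonneg hy.le r))

theorem exists_lintegral_rsub_rpow_mul_rpow_le {c d : ℝ} (hc0 : 0 ≤ c) (hc1 : c < 1)
    (hd : -1 < d) :
    ∃ A : ℝ≥0∞, A ≠ ∞ ∧ ∀ t, 0 < t →
      ∫⁻ s in Ioo 0 t, ENNReal.ofReal ((t - s) ^ (-c) * s ^ d) ≤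
        A * ENNReal.ofReal (t ^ (1 - c + d)) := by
  refine ⟨ENNReal.ofReal (1 / (2 ^ (1 - c + d) * (d + 1)) +
    (1 / 2 ^ (1 - c + d) + 1 / 2 ^ (1 - c)) / (1 - c)), ofReal_ne_top, fun t ht => ?_⟩
  have ht2 : 0 < t / 2 := half_pos ht
  have hd1 : 0 < d + 1 := by linarith
  have hc1' : 0 < -c + 1 := by linarith
  have near_zero : ∫⁻ s in Ioc 0 (t / 2), ENNReal.ofReal ((t - s) ^ (-c) * s ^ d) ≤
      ENNReal.ofReal ((t / 2) ^ (-c) * ((t / 2) ^ (d + 1) / (d + 1))) := by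
    calc _ ≤ ∫⁻ s in Ioc 0 (t / 2),
          ENNReal.ofReal ((t / 2) ^ (-c)) * ENNReal.ofReal (s ^ d) := by
          refine setLIntegral_mono' measurableSet_Ioc fun s hs => ?_
          rw [← ofReal_mul (by positivity)]
          exact ofReal_le_ofReal (mul_le_mul_of_nonneg_right (Real.rpow_le_rpow_of_nonpos ht2
            (by linarith [hs.2]) (by linarith)) (Real.rpow_nonneg hs.1.le d))
      _ = _ := by
          rw [lintegral_const_mul' _ _ ofReal_ne_top, lintegral_Ioc_zero_rpow hd ht2.le,
            ← ofReal_mul (by positivity)]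
  have near_t : ∫⁻ s in Ioc (t / 2) t, ENNReal.ofReal ((t - s) ^ (-c) * s ^ d) ≤
      ENNReal.ofReal (((t / 2) ^ d + t ^ d) * ((t / 2) ^ (-c + 1) / (-c + 1))) := by
    calc _ ≤ ∫⁻ s in Ioc (t / 2) t,
          ENNReal.ofReal ((t / 2) ^ d + t ^ d) * ENNReal.ofReal ((t - s) ^ (-c)) := by
          refine setLIntegral_mono' measurableSet_Ioc fun s hs => ?_
          rw [← ofReal_mul (by positivity), mul_comm]
          exact ofReal_le_ofReal (mul_le_mul_of_nonneg_right
            (rpow_le_rpow_add_rpow_of_mem_Icc ht2 (Ioc_subset_Icc_self hs) d)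
            (Real.rpow_nonneg (by linarith [hs.2]) _))
      _ = _ := by
          rw [lintegral_const_mul' _ _ ofReal_ne_top, lintegral_Ioc_rsub_rpow (by linarith)
            (by linarith), ← ofReal_mul (by positivity), show t - t / 2 = t / 2 by ring]
  calc _ ≤ ∫⁻ s in Ioc 0 t, ENNReal.ofReal ((t - s) ^ (-c) * s ^ d) :=
        lintegral_mono_set Ioo_subset_Ioc_self
    _ = (∫⁻ s in Ioc 0 (t / 2), ENNReal.ofReal ((t - s) ^ (-c) * s ^ d)) +
        ∫⁻ s in Ioc (t / 2) t, ENNReal.ofReal ((t - s) ^ (-c) * s ^ d) := by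
        rw [← Ioc_union_Ioc_eq_Ioc ht2.le (by linarith),
          lintegral_union measurableSet_Ioc (Ioc_disjoint_Ioc_of_le le_rfl)]
    _ ≤ _ := add_le_add near_zero near_t
    _ = _ := by
        rw [← ofReal_add (mul_nonneg (by positivity) (div_nonneg (by positivity) hd1.le))
          (mul_nonneg (by positivity) (div_nonneg (by positivity) hc1'.le)),
          ← ofReal_mul' (by positivity)]
        congr 1
        simp only [Real.div_rpow ht.le zero_le_two, sub_eq_add_neg, Real.rpow_add ht,
          Real.rpow_add two_pos, Real.rpow_one]
        have hc1'' : (1:ℝ) + -c ≠ 0 := by linarith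
        field_simp
        ring

theorem exists_lintegral_Ioi_rpow_mul_sub_rpow_le {c e : ℝ} (hc0 : 0 ≤ c) (hc1 : c < 1)
    (he : e - c < -1) :
    ∃ C : ℝ≥0∞, C ≠ ∞ ∧ ∀ s, 0 < s →
      ∫⁻ t in Ioi s, ENNReal.ofReal (t ^ e * (t - s) ^ (-c)) ≤
        C * ENNReal.ofReal (s ^ (e - c + 1)) := by
  refine ⟨ENNReal.ofReal ((1 + 2 ^ e) / (1 - c) + 2 ^ (e + 1) / -(e - c + 1)), ofReal_ne_top,
    fun s hs => ?_⟩
  have hc1' : 0 < -c + 1 := by linarith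
  have near_s : ∫⁻ t in Ioc s (2 * s), ENNReal.ofReal (t ^ e * (t - s) ^ (-c)) ≤
      ENNReal.ofReal ((s ^ e + (2 * s) ^ e) * (s ^ (-c + 1) / (-c + 1))) := by
    calc _ ≤ ∫⁻ t in Ioc s (2 * s),
          ENNReal.ofReal (s ^ e + (2 * s) ^ e) * ENNReal.ofReal ((t - s) ^ (-c)) := by
          refine setLIntegral_mono' measurableSet_Ioc fun t ht => ?_
          rw [← ofReal_mul (by positivity)]
          exact ofReal_le_ofReal (mul_le_mul_of_nonneg_right
            (rpow_le_rpow_add_rpow_of_mem_Icc hs (Ioc_subset_Icc_self ht) e)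
            (Real.rpow_nonneg (by linarith [ht.1]) _))
      _ = _ := by
          rw [lintegral_const_mul' _ _ ofReal_ne_top, lintegral_Ioc_sub_rpow (by linarith)
            (by linarith), ← ofReal_mul (by positivity), show 2 * s - s = s by ring]
  have far : ∫⁻ t in Ioi (2 * s), ENNReal.ofReal (t ^ e * (t - s) ^ (-c)) ≤
      ENNReal.ofReal (2 ^ c * (-(2 * s) ^ (e - c + 1) / (e - c + 1))) := by
    calc _ ≤ ∫⁻ t in Ioi (2 * s), ENNReal.ofReal (2 ^ c) * ENNReal.ofReal (t ^ (e - c)) := by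
          refine setLIntegral_mono' measurableSet_Ioi fun t ht => ?_
          have ht0 : 0 < t := by linarith [mem_Ioi.mp ht]
          rw [← ofReal_mul (by positivity)]
          refine ofReal_le_ofReal ?_
          calc t ^ e * (t - s) ^ (-c) ≤ t ^ e * (t / 2) ^ (-c) :=
                mul_le_mul_of_nonneg_left (Real.rpow_le_rpow_of_nonpos (by positivity)
                  (by linarith [mem_Ioi.mp ht]) (by linarith)) (by positivity)
            _ = 2 ^ c * t ^ (e - c) := by
                rw [Real.div_rpow ht0.le zero_le_two, Real.rpow_neg zero_le_two, Real.rpow_sub ht0,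
                  Real.rpow_neg ht0.le]
                field_simp
      _ = _ := by
          rw [lintegral_const_mul' _ _ ofReal_ne_top, ← ofReal_integral_eq_lintegral_ofReal
            (integrableOn_Ioi_rpow_of_lt he (by positivity))
            (ae_restrict_of_forall_mem measurableSet_Ioi fun t ht =>
              Real.rpow_nonneg (by linarith [mem_Ioi.mp ht]) _),
            integral_Ioi_rpow_of_lt he (by positivity), ← ofReal_mul (by positivity)]
  calc _ = (∫⁻ t in Ioc s (2 * s), ENNReal.ofReal (t ^ e * (t - s) ^ (-c))) +
        ∫⁻ t in Ioi (2 * s), ENNReal.ofReal (t ^ e * (t - s) ^ (-c)) := by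
        rw [← Ioc_union_Ioi_eq_Ioi (by linarith : s ≤ 2 * s),
          lintegral_union measurableSet_Ioi (Ioc_disjoint_Ioi le_rfl)]
    _ ≤ _ := add_le_add near_s far
    _ = _ := by
        rw [← ofReal_add (mul_nonneg (by positivity) (div_nonneg (by positivity) hc1'.le))
          (mul_nonneg (by positivity)
            (div_nonneg_of_nonpos (neg_nonpos.mpr (by positivity)) (by linarith))),
          ← ofReal_mul' (by positivity)]
        congr 1
        rw [Real.mul_rpow zero_le_two hs.le, Real.mul_rpow zero_le_two hs.le]
        simp only [sub_eq_add_neg, Real.rpow_add hs, Real.rpow_add two_pos, Real.rpow_one,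
          Real.rpow_neg zero_le_two]
        have hc1'' : (1:ℝ) + -c ≠ 0 := by linarith
        have hq : e + -c + 1 ≠ 0 := by linarith
        field_simp
        ring

theorem sq_lintegral_ofReal_mul_le {X : Type*} [MeasurableSpace X] {μ : Measure X}
    {k w f : X → ℝ} (hk : AEMeasurable k μ) (hw : AEMeasurable w μ) (hf : AEMeasurable f μ)
    (hk0 : ∀ᵐ x ∂μ, 0 ≤ k x) (hw0 : ∀ᵐ x ∂μ, 0 < w x) :
    (∫⁻ x, ENNReal.ofReal (k x * f x) ∂μ) ^ 2 ≤
      (∫⁻ x, ENNReal.ofReal (k x * w x) ∂μ) *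
        ∫⁻ x, ENNReal.ofReal (k x * f x ^ 2 / w x) ∂μ := by
  set F : X → ℝ≥0∞ := fun x => ENNReal.ofReal √(k x * w x)
  set G : X → ℝ≥0∞ := fun x => ENNReal.ofReal (√(k x / w x) * |f x|)
  have hFG : ∀ᵐ x ∂μ, ENNReal.ofReal (k x * f x) ≤ (F * G) x := by
    filter_upwards [hk0, hw0] with x hkx hwx
    rw [Pi.mul_apply, ← ofReal_mul (Real.sqrt_nonneg _), ← mul_assoc,
      ← Real.sqrt_mul (mul_nonneg hkx hwx.le), show k x * w x * (k x / w x) = k x ^ 2 by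
        field_simp, Real.sqrt_sq hkx]
    exact ofReal_le_ofReal (mul_le_mul_of_nonneg_left (le_abs_self _) hkx)
  have hF : ∀ᵐ x ∂μ, F x ^ (2 : ℝ) = ENNReal.ofReal (k x * w x) := by
    filter_upwards [hk0, hw0] with x hkx hwx
    rw [ENNReal.rpow_two, ← ofReal_pow (Real.sqrt_nonneg _), Real.sq_sqrt (mul_nonneg hkx hwx.le)]
  have hG : ∀ᵐ x ∂μ, G x ^ (2 : ℝ) = ENNReal.ofReal (k x * f x ^ 2 / w x) := by
    filter_upwards [hk0, hw0] with x hkx hwx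
    rw [ENNReal.rpow_two, ← ofReal_pow (by positivity), mul_pow, sq_abs,
      Real.sq_sqrt (div_nonneg hkx hwx.le), div_mul_eq_mul_div]
  have holder := ENNReal.lintegral_mul_le_Lp_mul_Lq μ Real.HolderConjugate.two_two
    (by fun_prop : AEMeasurable F μ) (by fun_prop : AEMeasurable G μ)
  rw [lintegral_congr_ae hF, lintegral_congr_ae hG] at holder
  calc _ ≤ (∫⁻ x, (F * G) x ∂μ) ^ 2 := by gcongr ?_ ^ 2; exact lintegral_mono_ae hFG
    _ ≤ ((∫⁻ x, ENNReal.ofReal (k x * w x) ∂μ) ^ (1 / 2 : ℝ) *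
          (∫⁻ x, ENNReal.ofReal (k x * f x ^ 2 / w x) ∂μ) ^ (1 / 2 : ℝ)) ^ 2 := by gcongr
    _ = _ := by
      rw [mul_pow, ← ENNReal.rpow_natCast, ← ENNReal.rpow_natCast, ← ENNReal.rpow_mul,
        ← ENNReal.rpow_mul]
      norm_num

theorem lintegral_Ioc_lintegral_Ioo_swap {a T : ℝ} {F : ℝ → ℝ → ℝ≥0∞}
    (hF : AEMeasurable (Function.uncurry F)
      ((volume.restrict (Ioc a T)).prod (volume.restrict (Ioo a T)))) :
    ∫⁻ t in Ioc a T, ∫⁻ s in Ioo a t, F t s =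
      ∫⁻ s in Ioo a T, ∫⁻ t in Ioc s T, F t s := by
  set G : ℝ → ℝ → ℝ≥0∞ := fun t => (Iio t).indicator (F t)
  have hG : AEMeasurable (Function.uncurry G)
      ((volume.restrict (Ioc a T)).prod (volume.restrict (Ioo a T))) :=
    hF.indicator (measurableSet_lt measurable_snd measurable_fst)
  calc _ = ∫⁻ t in Ioc a T, ∫⁻ s in Ioo a T, G t s := by
        refine setLIntegral_congr_fun measurableSet_Ioc fun t ht => ?_
        rw [lintegral_indicator measurableSet_Iio, Measure.restrict_restrict measurableSet_Iio,
          Iio_inter_Ioo, min_eq_left ht.2]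
    _ = ∫⁻ s in Ioo a T, ∫⁻ t in Ioc a T, G t s := lintegral_lintegral_swap hG
    _ = _ := by
        refine setLIntegral_congr_fun measurableSet_Ioo fun s hs => ?_
        have : ∀ t, G t s = (Ioi s).indicator (F · s) t := fun t => by
          simp only [G, indicator_apply, mem_Iio, mem_Ioi]
        simp_rw [this]
        rw [lintegral_indicator measurableSet_Ioi, Measure.restrict_restrict measurableSet_Ioi,
          inter_comm, Ioc_inter_Ioi, max_eq_right hs.1.le]

theorem ofReal_rpow_mul_sq_le_lintegral {b c d t a : ℝ} {A : ℝ≥0∞} {β : ℝ → ℝ}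
    (hA : ∫⁻ s in Ioo 0 t, ENNReal.ofReal ((t - s) ^ (-c) * s ^ d) ≤
      A * ENNReal.ofReal (t ^ (1 - c + d)))
    (ht : 0 < t) (hβ : AEMeasurable β (volume.restrict (Ioo 0 t))) (ha0 : 0 ≤ a)
    (ha : a ≤ 1 / t * ∫ s in Ioo 0 t, (t - s) ^ (-c) * β s) :
    ENNReal.ofReal (t ^ b * a ^ 2) ≤
      A * ∫⁻ s in Ioo 0 t, ENNReal.ofReal (t ^ (b - 1 - c + d) * (t - s) ^ (-c)) *
        ENNReal.ofReal (β s ^ 2 / s ^ d) := by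
  set I := ∫ s in Ioo 0 t, (t - s) ^ (-c) * β s
  have hk0 : ∀ᵐ s ∂volume.restrict (Ioo 0 t), 0 ≤ (t - s) ^ (-c) :=
    ae_restrict_of_forall_mem measurableSet_Ioo fun s hs =>
      Real.rpow_nonneg (by linarith [hs.2]) _
  have hw0 : ∀ᵐ s ∂volume.restrict (Ioo 0 t), 0 < s ^ d :=
    ae_restrict_of_forall_mem measurableSet_Ioo fun s hs => Real.rpow_pos_of_pos hs.1 _
  have hI : ENNReal.ofReal I ≤ ∫⁻ s in Ioo 0 t, ENNReal.ofReal ((t - s) ^ (-c) * |β s|) := by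
    refine (Real.ofReal_le_enorm I).trans ((enorm_integral_le_lintegral_enorm _).trans
      (lintegral_congr_ae ?_).le)
    filter_upwards [hk0] with s hs
    rw [Real.enorm_eq_ofReal_abs, abs_mul, abs_of_nonneg hs]
  have hI0 : 0 ≤ I := (mul_nonneg_iff_of_pos_left (by positivity)).mp (ha0.trans ha)
  have hta : t ^ b * a ^ 2 ≤ t ^ (b - 2) * I ^ 2 := by
    calc t ^ b * a ^ 2 ≤ t ^ b * (1 / t * I) ^ 2 := by gcongr
      _ = t ^ (b - 2) * I ^ 2 := by
        rw [Real.rpow_sub ht, Real.rpow_two]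
        field_simp
  calc ENNReal.ofReal (t ^ b * a ^ 2)
      ≤ ENNReal.ofReal (t ^ (b - 2)) * ENNReal.ofReal I ^ 2 := by
        rw [← ofReal_pow hI0, ← ofReal_mul (by positivity)]
        exact ofReal_le_ofReal hta
    _ ≤ ENNReal.ofReal (t ^ (b - 2)) * ((A * ENNReal.ofReal (t ^ (1 - c + d))) *
          ∫⁻ s in Ioo 0 t, ENNReal.ofReal ((t - s) ^ (-c) * |β s| ^ 2 / s ^ d)) := by
        gcongr
        refine (pow_le_pow_left' hI 2).trans ?_
        refine (sq_lintegral_ofReal_mul_le (by fun_prop) (by fun_prop) hβ.abs hk0 hw0).trans ?_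
        gcongr
    _ = _ := by
        rw [mul_comm A, mul_assoc, ← mul_assoc, ← ofReal_mul (by positivity),
          ← Real.rpow_add ht, mul_left_comm, ← lintegral_const_mul' _ _ ofReal_ne_top]
        congr 1
        refine setLIntegral_congr_fun measurableSet_Ioo fun s hs => ?_
        have hk : 0 ≤ (t - s) ^ (-c) := Real.rpow_nonneg (by linarith [hs.2]) _
        rw [← ofReal_mul (by positivity), ← ofReal_mul (by positivity), sq_abs]
        ring_nf

theorem lintegral_Ioc_rpow_mul_sub_rpow_mul_le {b c d s T y : ℝ} {C : ℝ≥0∞}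
    (hC : ∫⁻ t in Ioi s, ENNReal.ofReal (t ^ (b - 1 - c + d) * (t - s) ^ (-c)) ≤
      C * ENNReal.ofReal (s ^ (b - 1 - c + d - c + 1)))
    (hs : 0 < s) :
    ∫⁻ t in Ioc s T, ENNReal.ofReal (t ^ (b - 1 - c + d) * (t - s) ^ (-c)) *
      ENNReal.ofReal (y / s ^ d) ≤ C * ENNReal.ofReal (s ^ (b - 2 * c) * y) := by
  rw [lintegral_mul_const' _ _ ofReal_ne_top]
  calc _ ≤ C * ENNReal.ofReal (s ^ (b - 1 - c + d - c + 1)) * ENNReal.ofReal (y / s ^ d) := by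
        gcongr
        exact (lintegral_mono_set Ioc_subset_Ioi_self).trans hC
    _ = _ := by
        rw [mul_assoc, ← ofReal_mul (Real.rpow_nonneg hs.le _),
          show b - 2 * c = b - 1 - c + d - c + 1 - d by ring, Real.rpow_sub hs]
        ring_nf

/-- The convolution inequality, Lemma 4.25: let `0 ≤ c < 1` and `b < 2c+1`.  There is a
constant `γ` depending only on `b` and `c` such that for every `0 < T < ∞` and all
non-negative measurable `α, β` on `(0,T]` satisfying
`α(t) ≤ (1/t) ∫₀ᵗ (t-s)^{-c} β(s) ds`, one has
`∫₀ᵀ t^b α(t)² dt ≤ γ ∫₀ᵀ s^{b-2c} β(s)² ds` (integrals interpreted in `[0,∞]`). -/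
theorem convolution_inequality (c b : ℝ) (hc0 : 0 ≤ c) (hc1 : c < 1) (hb : b < 2 * c + 1) :
    ∃ γ : ℝ, 0 ≤ γ ∧ ∀ (T : ℝ), 0 < T → ∀ (α β : ℝ → ℝ),
      AEMeasurable α (volume.restrict (Set.Ioc 0 T)) →
      AEMeasurable β (volume.restrict (Set.Ioc 0 T)) →
      (∀ s ∈ Set.Ioc (0:ℝ) T, 0 ≤ α s) →
      (∀ s ∈ Set.Ioc (0:ℝ) T, 0 ≤ β s) →
      (∀ t ∈ Set.Ioc (0:ℝ) T, α t ≤ (1 / t) * ∫ s in Set.Ioo (0:ℝ) t, (t - s) ^ (-c) * β s) →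
      ∫⁻ t in Set.Ioc (0:ℝ) T, ENNReal.ofReal (t ^ b * α t ^ 2) ≤
        ENNReal.ofReal γ *
          ∫⁻ s in Set.Ioc (0:ℝ) T, ENNReal.ofReal (s ^ (b - 2 * c) * β s ^ 2) := by
  obtain ⟨d, hd, he⟩ : ∃ d : ℝ, -1 < d ∧ b - 1 - c + d - c < -1 :=
    ⟨(2 * c - b - 1) / 2, by linarith, by linarith⟩
  obtain ⟨A, hA, hAk⟩ := exists_lintegral_rsub_rpow_mul_rpow_le hc0 hc1 hd
  obtain ⟨C, hC, hCk⟩ := exists_lintegral_Ioi_rpow_mul_sub_rpow_le hc0 hc1 he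
  refine ⟨(A * C).toReal, toReal_nonneg, fun T hT α β _ hβ hα0 _ hαβ => ?_⟩
  set K : ℝ → ℝ → ℝ≥0∞ := fun t s =>
    ENNReal.ofReal (t ^ (b - 1 - c + d) * (t - s) ^ (-c)) * ENNReal.ofReal (β s ^ 2 / s ^ d)
  have hK : AEMeasurable (Function.uncurry K)
      ((volume.restrict (Ioc 0 T)).prod (volume.restrict (Ioo 0 T))) := by
    have hβ' := hβ.mono_set Ioo_subset_Ioc_self
    have hg : AEMeasurable (fun s => ENNReal.ofReal (β s ^ 2 / s ^ d))
        (volume.restrict (Ioo 0 T)) := by fun_prop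
    exact (Measurable.aemeasurable (by fun_prop)).mul hg.comp_snd
  calc _ ≤ ∫⁻ t in Ioc 0 T, A * ∫⁻ s in Ioo 0 t, K t s :=
        setLIntegral_mono' measurableSet_Ioc fun t ht => ofReal_rpow_mul_sq_le_lintegral
          (hAk t ht.1) ht.1 (hβ.mono_set (Ioo_subset_Ioc_self.trans (Ioc_subset_Ioc_right ht.2)))
          (hα0 t ht) (hαβ t ht)
    _ = A * ∫⁻ s in Ioo 0 T, ∫⁻ t in Ioc s T, K t s := by
        rw [lintegral_const_mul' _ _ hA, lintegral_Ioc_lintegral_Ioo_swap hK]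
    _ ≤ A * ∫⁻ s in Ioo 0 T, C * ENNReal.ofReal (s ^ (b - 2 * c) * β s ^ 2) := by
        gcongr A * ?_
        exact setLIntegral_mono' measurableSet_Ioo fun s hs =>
          lintegral_Ioc_rpow_mul_sub_rpow_mul_le (hCk s hs.1) hs.1
    _ ≤ _ := by
        rw [lintegral_const_mul' _ _ hC, ← mul_assoc, ofReal_toReal (mul_ne_top hA hC)]
        gcongr
        exact Ioo_subset_Ioc_self
end

section
/- Let 2 ≤ q < ∞, let n ≥ 1, and let M be either ℝ³ or the closure of a bounded open subset of ℝ³, equipped with Lebesgue measure. Let u ∈ L^q(M; Matrix_{n×n}(ℂ)) and let ε > 0. Then there exists δ > 0, depending on ε and u, such that for every measurable function g : M → U(n) (the group of n×n unitary matrices), if ‖g - I‖_{L²(M)} < δ then ‖g u g^{-1} - u‖_{L^q(M)} < ε, where (g u g^{-1})(x) = g(x) u(x) g(x)^{-1}. -/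
/-!
Conjugation by a unitary matrix is an isometry for the Frobenius norm, so
`‖g a g⁻¹ - a‖ = ‖(g - 1) a - a (g - 1)‖ ≤ 2 ‖g - 1‖ ‖a‖`, and also `‖g a g⁻¹ - a‖ ≤ 2 ‖a‖`.
Split `u` into a part bounded by some `C` and a part of `L^q` norm at most `ε / 4`: the latter
contributes at most `ε / 2`, the former at most `2 C ‖g - 1‖_{L^q}`. As `‖g - 1‖ ≤ 2 ‖1‖`
pointwise, `‖g - 1‖_{L^q}^q ≤ (2 ‖1‖)^{q - 2} ‖g - 1‖_{L^2}^2`, which is small with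
`‖g - 1‖_{L^2}`.
-/

open MeasureTheory

attribute [local instance] Matrix.frobeniusSeminormedAddCommGroup
  Matrix.frobeniusNormedAddCommGroup

section Frobenius
open Matrix

variable {m n 𝕜 : Type*} [Fintype m] [Fintype n] [RCLike 𝕜]

theorem Matrix.frobenius_norm_sq_eq_trace (A : Matrix m n 𝕜) :
    ((‖A‖ ^ 2 : ℝ) : 𝕜) = (Aᴴ * A).trace := by
  rw [frobenius_norm_def, ← Real.sqrt_eq_rpow, Real.sq_sqrt (by positivity), Finset.sum_comm]
  simp only [trace, diag_apply, mul_apply, conjTranspose_apply, RCLike.star_def, RCLike.conj_mul]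
  norm_cast

variable [DecidableEq m]

theorem Matrix.frobenius_norm_unitary_mul {U : Matrix m m 𝕜} (hU : U ∈ unitaryGroup m 𝕜)
    (A : Matrix m n 𝕜) : ‖U * A‖ = ‖A‖ := by
  have hsq : ‖U * A‖ ^ 2 = ‖A‖ ^ 2 := by
    apply RCLike.ofReal_injective (K := 𝕜)
    rw [frobenius_norm_sq_eq_trace, frobenius_norm_sq_eq_trace, conjTranspose_mul,
      Matrix.mul_assoc, ← Matrix.mul_assoc Uᴴ, ← star_eq_conjTranspose,
      mem_unitaryGroup_iff'.mp hU, Matrix.one_mul]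
  exact (sq_eq_sq₀ (norm_nonneg _) (norm_nonneg _)).mp hsq

theorem Matrix.frobenius_norm_mul_unitary {U : Matrix m m 𝕜} (hU : U ∈ unitaryGroup m 𝕜)
    (A : Matrix n m 𝕜) : ‖A * U‖ = ‖A‖ := by
  rw [← frobenius_norm_conjTranspose, conjTranspose_mul, ← star_eq_conjTranspose,
    frobenius_norm_unitary_mul (Unitary.star_mem hU), frobenius_norm_conjTranspose]

theorem Matrix.frobenius_norm_of_mem_unitaryGroup {U : Matrix m m 𝕜}
    (hU : U ∈ unitaryGroup m 𝕜) : ‖U‖ = ‖(1 : Matrix m m 𝕜)‖ := by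
  rw [← frobenius_norm_mul_unitary hU 1, Matrix.one_mul]

theorem Matrix.frobenius_nnnorm_sub_one_le {U : Matrix m m 𝕜} (hU : U ∈ unitaryGroup m 𝕜) :
    ‖U - 1‖₊ ≤ 2 * ‖(1 : Matrix m m 𝕜)‖₊ := by
  have hU' : ‖U‖₊ = ‖(1 : Matrix m m 𝕜)‖₊ := NNReal.eq (frobenius_norm_of_mem_unitaryGroup hU)
  calc ‖U - 1‖₊ ≤ ‖U‖₊ + ‖(1 : Matrix m m 𝕜)‖₊ := nnnorm_sub_le U 1
    _ = 2 * ‖(1 : Matrix m m 𝕜)‖₊ := by rw [hU', two_mul]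

theorem Matrix.frobenius_norm_conj_sub_le {g : Matrix m m 𝕜} (hg : g ∈ unitaryGroup m 𝕜)
    (a : Matrix m m 𝕜) : ‖g * a * g⁻¹ - a‖ ≤ 2 * ‖g - 1‖ * ‖a‖ := by
  have hinv : g⁻¹ = star g := inv_eq_left_inv (mem_unitaryGroup_iff'.mp hg)
  have hcomm : g * a * g⁻¹ - a = ((g - 1) * a - a * (g - 1)) * star g := by
    have hexpand : ((g - 1) * a - a * (g - 1)) * star g = g * a * star g - a * (g * star g) := by
      noncomm_ring
    rw [hinv, hexpand, mem_unitaryGroup_iff.mp hg, Matrix.mul_one]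
  calc ‖g * a * g⁻¹ - a‖ = ‖(g - 1) * a - a * (g - 1)‖ := by
        rw [hcomm, frobenius_norm_mul_unitary (Unitary.star_mem hg)]
    _ ≤ ‖g - 1‖ * ‖a‖ + ‖a‖ * ‖g - 1‖ :=
        (norm_sub_le _ _).trans (add_le_add (frobenius_norm_mul _ _) (frobenius_norm_mul _ _))
    _ = 2 * ‖g - 1‖ * ‖a‖ := by ring

theorem Matrix.frobenius_norm_conj_sub_le_two_mul {g : Matrix m m 𝕜}
    (hg : g ∈ unitaryGroup m 𝕜) (a : Matrix m m 𝕜) : ‖g * a * g⁻¹ - a‖ ≤ 2 * ‖a‖ := by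
  have hinv : g⁻¹ = star g := inv_eq_left_inv (mem_unitaryGroup_iff'.mp hg)
  calc ‖g * a * g⁻¹ - a‖ ≤ ‖g * a * g⁻¹‖ + ‖a‖ := norm_sub_le _ _
    _ = 2 * ‖a‖ := by
        rw [hinv, frobenius_norm_mul_unitary (Unitary.star_mem hg), frobenius_norm_unitary_mul hg]
        ring

end Frobenius

section Lp

open ENNReal
open scoped NNReal

variable {α E : Type*} [MeasurableSpace α] {μ : Measure α} [NormedAddCommGroup E]

theorem eLpNorm_ofReal_le_of_nnnorm_le {f : α → E} {K : ℝ≥0} (hK : ∀ x, ‖f x‖₊ ≤ K)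
    {p q : ℝ} (hp : 0 < p) (hpq : p ≤ q) :
    eLpNorm f (ENNReal.ofReal q) μ ≤
      (K : ℝ≥0∞) ^ (1 - p / q) * eLpNorm f (ENNReal.ofReal p) μ ^ (p / q) := by
  have hq : 0 < q := hp.trans_le hpq
  rw [eLpNorm_eq_eLpNorm' (by simpa using hq) ofReal_ne_top,
    eLpNorm_eq_eLpNorm' (by simpa using hp) ofReal_ne_top, toReal_ofReal hq.le,
    toReal_ofReal hp.le]
  have hlintegral : ∫⁻ x, ‖f x‖ₑ ^ q ∂μ ≤ (K : ℝ≥0∞) ^ (q - p) * ∫⁻ x, ‖f x‖ₑ ^ p ∂μ := by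
    rw [← lintegral_const_mul' _ _ (rpow_ne_top_of_nonneg (sub_nonneg.2 hpq) coe_ne_top)]
    refine lintegral_mono fun x => ?_
    calc ‖f x‖ₑ ^ q = ‖f x‖ₑ ^ (q - p) * ‖f x‖ₑ ^ p := by
          rw [← rpow_add_of_nonneg _ _ (sub_nonneg.2 hpq) hp.le, sub_add_cancel]
      _ ≤ (K : ℝ≥0∞) ^ (q - p) * ‖f x‖ₑ ^ p := by
          gcongr
          exact_mod_cast hK x
  rw [lintegral_rpow_enorm_eq_rpow_eLpNorm' hq, lintegral_rpow_enorm_eq_rpow_eLpNorm' hp]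
    at hlintegral
  calc eLpNorm' f q μ = (eLpNorm' f q μ ^ q) ^ (1 / q) := by
        rw [← rpow_mul, mul_one_div_cancel hq.ne', rpow_one]
    _ ≤ ((K : ℝ≥0∞) ^ (q - p) * eLpNorm' f p μ ^ p) ^ (1 / q) := by gcongr
    _ = (K : ℝ≥0∞) ^ (1 - p / q) * eLpNorm' f p μ ^ (p / q) := by
        rw [mul_rpow_of_nonneg _ _ (by positivity), ← rpow_mul, ← rpow_mul]
        congr 2 <;> field_simp

theorem MeasureTheory.MemLp.exists_ae_eq_bounded_add_eLpNorm_le {p : ℝ≥0∞} {u : α → E}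
    (hu : MemLp u p μ) {ε : ℝ} (hε : 0 < ε) :
    ∃ (C : ℝ≥0) (v w : α → E), (∀ x, ‖v x‖ ≤ C) ∧ StronglyMeasurable w ∧
      eLpNorm w p μ ≤ ENNReal.ofReal ε ∧ u =ᵐ[μ] v + w := by
  set u' := hu.1.mk u
  have hu' : StronglyMeasurable u' := hu.1.stronglyMeasurable_mk
  obtain ⟨M, hM, hsmall⟩ :=
    (hu.ae_eq hu.1.ae_eq_mk).eLpNorm_indicator_norm_ge_pos_le hu' hε
  set s := {x | M ≤ ‖u' x‖₊}
  have hs : MeasurableSet s := measurableSet_le measurable_const hu'.nnnorm.measurable.subtype_coe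
  refine ⟨M.toNNReal, sᶜ.indicator u', s.indicator u', fun x => ?_, hu'.indicator hs, hsmall, ?_⟩
  · rw [Real.coe_toNNReal _ hM.le, norm_indicator_eq_indicator_norm]
    by_cases hx : x ∈ s
    · simp [hx, hM.le]
    · rw [Set.indicator_of_mem (Set.mem_compl hx)]
      exact (not_le.1 hx).le
  · filter_upwards [hu.1.ae_eq_mk] with x hx
    rw [hx, Pi.add_apply, Set.indicator_compl_add_self_apply]

end Lp

section AdjointAction

open ENNReal Filter Topology Matrix
open scoped NNReal

variable {α m 𝕜 : Type*} [MeasurableSpace α] {μ : Measure α} [Fintype m] [DecidableEq m]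
  [RCLike 𝕜]

theorem eLpNorm_conj_sub_le {p : ℝ≥0∞} (hp : 1 ≤ p) {g u v w : α → Matrix m m 𝕜}
    (hg : AEStronglyMeasurable g μ) (hgU : ∀ x, g x ∈ unitaryGroup m 𝕜) {C : ℝ≥0}
    (hv : ∀ x, ‖v x‖ ≤ C) (hw : AEStronglyMeasurable w μ) (huvw : u =ᵐ[μ] v + w) :
    eLpNorm (fun x => g x * u x * (g x)⁻¹ - u x) p μ ≤
      2 * C * eLpNorm (fun x => g x - 1) p μ + 2 * eLpNorm w p μ := by
  have hpointwise : ∀ᵐ x ∂μ,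
      ‖g x * u x * (g x)⁻¹ - u x‖ ≤ (2 * C : ℝ) * ‖g x - 1‖ + 2 * ‖w x‖ := by
    filter_upwards [huvw] with x hx
    have hsplit : g x * u x * (g x)⁻¹ - u x =
        (g x * v x * (g x)⁻¹ - v x) + (g x * w x * (g x)⁻¹ - w x) := by
      rw [hx, Pi.add_apply]
      noncomm_ring
    calc ‖g x * u x * (g x)⁻¹ - u x‖
        ≤ 2 * ‖g x - 1‖ * ‖v x‖ + 2 * ‖w x‖ := hsplit ▸ (norm_add_le _ _).trans
          (add_le_add (frobenius_norm_conj_sub_le (hgU x) _)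
            (frobenius_norm_conj_sub_le_two_mul (hgU x) _))
      _ ≤ (2 * C : ℝ) * ‖g x - 1‖ + 2 * ‖w x‖ := by
          rw [mul_right_comm]
          gcongr
          exact hv x
  have hg1 : AEStronglyMeasurable (fun x => ‖g x - 1‖) μ :=
    (hg.sub aestronglyMeasurable_const).norm
  calc eLpNorm (fun x => g x * u x * (g x)⁻¹ - u x) p μ
      ≤ eLpNorm (((2 * C : ℝ) • fun x => ‖g x - 1‖) + (2 : ℝ) • fun x => ‖w x‖) p μ :=
        eLpNorm_mono_ae_real hpointwise
    _ ≤ eLpNorm ((2 * C : ℝ) • fun x => ‖g x - 1‖) p μ +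
          eLpNorm ((2 : ℝ) • fun x => ‖w x‖) p μ :=
        eLpNorm_add_le (hg1.const_smul _) (hw.norm.const_smul _) hp
    _ = 2 * C * eLpNorm (fun x => g x - 1) p μ + 2 * eLpNorm w p μ := by
        rw [eLpNorm_const_smul, eLpNorm_const_smul, eLpNorm_norm, eLpNorm_norm]
        simp [enorm_eq_nnnorm]

theorem exists_pos_eLpNorm_conj_sub_lt {q : ℝ} (hq : 2 ≤ q) {u : α → Matrix m m 𝕜}
    (hu : MemLp u (ENNReal.ofReal q) μ) {ε : ℝ} (hε : 0 < ε) :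
    ∃ δ : ℝ, 0 < δ ∧ ∀ g : α → Matrix m m 𝕜,
      AEStronglyMeasurable g μ → (∀ x, g x ∈ unitaryGroup m 𝕜) →
      eLpNorm (fun x => g x - 1) 2 μ < ENNReal.ofReal δ →
      eLpNorm (fun x => g x * u x * (g x)⁻¹ - u x) (ENNReal.ofReal q) μ < ENNReal.ofReal ε := by
  obtain ⟨C, v, w, hv, hw, hwε, huvw⟩ :=
    hu.exists_ae_eq_bounded_add_eLpNorm_le (by positivity : 0 < ε / 4)
  set K : ℝ≥0 := 2 * ‖(1 : Matrix m m 𝕜)‖₊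
  set bound : ℝ≥0∞ → ℝ≥0∞ := fun t => 2 * C * ((K : ℝ≥0∞) ^ (1 - 2 / q) * t ^ (2 / q))
  have hbound : Tendsto bound (𝓝 0) (𝓝 0) := by
    have hrpow : Tendsto (fun t : ℝ≥0∞ => t ^ (2 / q)) (𝓝 0) (𝓝 0) := by
      simpa [zero_rpow_of_pos (by positivity : 0 < 2 / q)] using
        (continuous_rpow_const (y := 2 / q)).tendsto 0
    have hK : (K : ℝ≥0∞) ^ (1 - 2 / q) ≠ ⊤ := rpow_ne_top_of_nonneg
      (sub_nonneg.2 ((div_le_one (by linarith)).2 hq)) coe_ne_top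
    simpa using ENNReal.Tendsto.const_mul (ENNReal.Tendsto.const_mul hrpow (Or.inr hK))
      (Or.inr (by finiteness))
  have hsmall : ∀ᶠ δ in 𝓝[>] (0 : ℝ), bound (ENNReal.ofReal δ) < ENNReal.ofReal (ε / 2) :=
    (hbound.comp ((continuous_ofReal.tendsto' 0 0 ofReal_zero).mono_left nhdsWithin_le_nhds))
      |>.eventually (gt_mem_nhds (ofReal_pos.2 (half_pos hε)))
  obtain ⟨δ, hδε, hδ⟩ := (hsmall.and self_mem_nhdsWithin).exists
  refine ⟨δ, hδ, fun g hg hgU hgδ => ?_⟩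
  have hinterp := eLpNorm_ofReal_le_of_nnnorm_le (μ := μ) (f := fun x => g x - 1)
    (fun x => frobenius_nnnorm_sub_one_le (hgU x)) two_pos hq
  rw [ofReal_ofNat] at hinterp
  calc eLpNorm (fun x => g x * u x * (g x)⁻¹ - u x) (ENNReal.ofReal q) μ
      ≤ 2 * C * eLpNorm (fun x => g x - 1) (ENNReal.ofReal q) μ +
          2 * eLpNorm w (ENNReal.ofReal q) μ :=
        eLpNorm_conj_sub_le (by simpa using one_le_two.trans hq) hg hgU hv
          hw.aestronglyMeasurable huvw
    _ ≤ bound (ENNReal.ofReal δ) + 2 * ENNReal.ofReal (ε / 4) := by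
        dsimp only [bound]
        gcongr
        exact hinterp.trans (by gcongr)
    _ < ENNReal.ofReal (ε / 2) + ENNReal.ofReal (ε / 2) := by
        refine ENNReal.add_lt_add_of_lt_of_le (by finiteness) hδε (le_of_eq ?_)
        rw [← ofReal_ofNat 2, ← ofReal_mul zero_le_two]
        ring_nf
    _ = ENNReal.ofReal ε := by rw [← ofReal_add (by positivity) (by positivity), add_halves]

end AdjointAction

theorem adjoint_action_strong_continuity_general
    (n : ℕ) (q : ℝ) (hq : 2 ≤ q)
    (M : Set (EuclideanSpace ℝ (Fin 3)))
    (u : EuclideanSpace ℝ (Fin 3) → Matrix (Fin n) (Fin n) ℂ)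
    (hu : MemLp u (ENNReal.ofReal q) (volume.restrict M))
    (ε : ℝ) (hε : 0 < ε) :
    ∃ δ : ℝ, 0 < δ ∧ ∀ g : EuclideanSpace ℝ (Fin 3) → Matrix (Fin n) (Fin n) ℂ,
      AEStronglyMeasurable g (volume.restrict M) → (∀ x, g x ∈ Matrix.unitaryGroup (Fin n) ℂ) →
      eLpNorm (fun x => g x - 1) 2 (volume.restrict M) < ENNReal.ofReal δ →
      eLpNorm (fun x => g x * u x * (g x)⁻¹ - u x) (ENNReal.ofReal q) (volume.restrict M) <
        ENNReal.ofReal ε :=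
  exists_pos_eLpNorm_conj_sub_lt hq hu hε

/-- Lemma 7.13(a): strong continuity of the adjoint action.  For `M ⊆ ℝ³` either all of
`ℝ³` or the closure of a bounded open set, `2 ≤ q < ∞`, `u ∈ L^q(M; Matrix_{n×n}(ℂ))`
(Frobenius norm) and `ε > 0`, there is `δ > 0` (depending on `ε` and `u`) such that for
every measurable `g : M → U(n)`, if `‖g - I‖_{L²(M)} < δ` then
`‖g u g⁻¹ - u‖_{L^q(M)} < ε`. -/
theorem adjoint_action_strong_continuity
    (n : ℕ) (hn : 1 ≤ n) (q : ℝ) (hq : 2 ≤ q)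
    (M : Set (EuclideanSpace ℝ (Fin 3)))
    (hM : M = Set.univ ∨
      ∃ U : Set (EuclideanSpace ℝ (Fin 3)), IsOpen U ∧ Bornology.IsBounded U ∧ M = closure U)
    (u : EuclideanSpace ℝ (Fin 3) → Matrix (Fin n) (Fin n) ℂ)
    (hu : MemLp u (ENNReal.ofReal q) (volume.restrict M))
    (ε : ℝ) (hε : 0 < ε) :
    ∃ δ : ℝ, 0 < δ ∧ ∀ g : EuclideanSpace ℝ (Fin 3) → Matrix (Fin n) (Fin n) ℂ,
      AEStronglyMeasurable g (volume.restrict M) → (∀ x, g x ∈ Matrix.unitaryGroup (Fin n) ℂ) →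
      eLpNorm (fun x => g x - 1) 2 (volume.restrict M) < ENNReal.ofReal δ →
      eLpNorm (fun x => g x * u x * (g x)⁻¹ - u x) (ENNReal.ofReal q) (volume.restrict M) <
        ENNReal.ofReal ε :=
  adjoint_action_strong_continuity_general n q hq M u hu ε hε
end

section
/- Let 1/2 ≤ a ≤ 1 and define r_a by 1/r_a = (2/3) - (a/3). Let (X, m) be a measure space, let 0 < T < ∞, and let u(s), for s ∈ (0,T], be a measurable family of measurable functions on X (with values in a normed space). Then ∫₀ᵀ s^a ‖u(s)‖_{L^{r_a}(m)}² ds ≤ T^{a-(1/2)} ( ∫₀ᵀ s^{1-a} ‖u(s)‖_{L²(m)}² ds )^{(3/2)-a} ( ∫₀ᵀ s^{2-a} ‖u(s)‖_{L⁶(m)}² ds )^{a-(1/2)}, all integrals being interpreted in [0,∞]. -/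
open MeasureTheory
open scoped ENNReal

/-!
For fixed `s`, Hölder's inequality in `x` interpolates `‖u s‖_r` between `‖u s‖₂` and `‖u s‖₆`
with weights `3/2 - a` and `a - 1/2`, since `1/r = (3/2 - a)/2 + (a - 1/2)/6`. The time weight
splits as `s^a = s^(a - 1/2) (s^(1-a))^(3/2 - a) (s^(2-a))^(a - 1/2)` with
`s^(a - 1/2) ≤ T^(a - 1/2)`, and Hölder's inequality in `s` with the same pair of exponents
concludes.
-/

section Interpolation

variable {X E : Type*} [MeasurableSpace X] {μ : Measure X} [TopologicalSpace E]
  [ContinuousENorm E] {f : X → E}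

theorem eLpNorm_ofReal_eq_lintegral_rpow {p : ℝ} (hp : 0 < p) :
    eLpNorm f (ENNReal.ofReal p) μ = (∫⁻ x, ‖f x‖ₑ ^ p ∂μ) ^ (1 / p) := by
  rw [eLpNorm_eq_lintegral_rpow_enorm_toReal (by simpa using hp) ENNReal.ofReal_ne_top,
    ENNReal.toReal_ofReal hp.le]

theorem eLpNorm_ofReal_le_eLpNorm_rpow_mul_eLpNorm_rpow (hf : AEStronglyMeasurable f μ)
    {p q r α β : ℝ} (hp : 0 < p) (hq : 0 < q) (hα : 0 ≤ α) (hβ : 0 ≤ β) (hαβ : α + β = 1)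
    (hr : 1 / r = α / p + β / q) :
    eLpNorm f (ENNReal.ofReal r) μ ≤
      eLpNorm f (ENNReal.ofReal p) μ ^ α * eLpNorm f (ENNReal.ofReal q) μ ^ β := by
  have hr_pos : 0 < r := by
    rw [← one_div_pos, hr]
    rcases hα.eq_or_lt with rfl | hα_pos
    · rw [zero_add] at hαβ; subst hαβ; positivity
    · positivity
  -- Hölder for the conjugate exponents `r α / p` and `r β / q`, applied to `‖f‖ₑ ^ p`, `‖f‖ₑ ^ q`
  have holder := ENNReal.lintegral_mul_norm_pow_le (μ := μ) (hf.enorm.pow_const p)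
    (hf.enorm.pow_const q) (by positivity : 0 ≤ r * α / p) (by positivity : 0 ≤ r * β / q)
    (by rw [mul_div_assoc, mul_div_assoc, ← mul_add, ← hr, mul_one_div_cancel hr_pos.ne'])
  have hpow : ∀ x, ‖f x‖ₑ ^ r = (‖f x‖ₑ ^ p) ^ (r * α / p) * (‖f x‖ₑ ^ q) ^ (r * β / q) := by
    intro x
    rw [← ENNReal.rpow_mul, ← ENNReal.rpow_mul,
      ← ENNReal.rpow_add_of_nonneg _ _ (by positivity) (by positivity)]
    congr 1
    field_simp
    exact hαβ.symm
  simp only [← hpow] at holder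
  simp only [eLpNorm_ofReal_eq_lintegral_rpow hp, eLpNorm_ofReal_eq_lintegral_rpow hq,
    eLpNorm_ofReal_eq_lintegral_rpow hr_pos]
  calc (∫⁻ x, ‖f x‖ₑ ^ r ∂μ) ^ (1 / r)
      ≤ ((∫⁻ x, ‖f x‖ₑ ^ p ∂μ) ^ (r * α / p) * (∫⁻ x, ‖f x‖ₑ ^ q ∂μ) ^ (r * β / q)) ^ (1 / r) :=
        ENNReal.rpow_le_rpow holder (by positivity)
    _ = ((∫⁻ x, ‖f x‖ₑ ^ p ∂μ) ^ (1 / p)) ^ α * ((∫⁻ x, ‖f x‖ₑ ^ q ∂μ) ^ (1 / q)) ^ β := by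
        rw [ENNReal.mul_rpow_of_nonneg _ _ (by positivity),
          ← ENNReal.rpow_mul, ← ENNReal.rpow_mul, ← ENNReal.rpow_mul, ← ENNReal.rpow_mul]
        congr 2 <;> field_simp

end Interpolation

theorem ENNReal.ofReal_rpow_add_le {s T γ x y α β : ℝ} (hs : 0 < s) (hsT : s ≤ T) (hγ : 0 ≤ γ)
    (hα : 0 ≤ α) (hβ : 0 ≤ β) :
    ENNReal.ofReal (s ^ (γ + x * α + y * β)) ≤
      ENNReal.ofReal (T ^ γ) * ENNReal.ofReal (s ^ x) ^ α * ENNReal.ofReal (s ^ y) ^ β := by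
  have hTγ : 0 ≤ T ^ γ := Real.rpow_nonneg (hs.le.trans hsT) γ
  rw [ENNReal.ofReal_rpow_of_nonneg (by positivity) hα,
    ENNReal.ofReal_rpow_of_nonneg (by positivity) hβ,
    ← ENNReal.ofReal_mul hTγ, ← ENNReal.ofReal_mul (by positivity)]
  refine ENNReal.ofReal_le_ofReal ?_
  rw [← Real.rpow_mul hs.le, ← Real.rpow_mul hs.le, Real.rpow_add hs, Real.rpow_add hs]
  gcongr

theorem ENNReal.rpow_mul_rpow_pow (x y : ℝ≥0∞) (α β : ℝ) (n : ℕ) :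
    (x ^ α * y ^ β) ^ n = (x ^ n) ^ α * (y ^ n) ^ β := by
  rw [mul_pow, ← ENNReal.rpow_mul_natCast, ← ENNReal.rpow_mul_natCast,
    ← ENNReal.rpow_natCast_mul, ← ENNReal.rpow_natCast_mul, mul_comm α, mul_comm β]

theorem ofReal_rpow_mul_eLpNorm_sq_le {X E : Type*} [MeasurableSpace X] {μ : Measure X}
    [TopologicalSpace E] [ContinuousENorm E] {f : X → E} (hf : AEStronglyMeasurable f μ)
    {a r s T : ℝ} (ha1 : 1 / 2 ≤ a) (ha2 : a ≤ 3 / 2) (hr : 1 / r = 2 / 3 - a / 3)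
    (hs : 0 < s) (hsT : s ≤ T) :
    ENNReal.ofReal (s ^ a) * eLpNorm f (ENNReal.ofReal r) μ ^ 2 ≤
      ENNReal.ofReal (T ^ (a - 1 / 2)) *
        ((ENNReal.ofReal (s ^ (1 - a)) * eLpNorm f 2 μ ^ 2) ^ (3 / 2 - a) *
          (ENNReal.ofReal (s ^ (2 - a)) * eLpNorm f 6 μ ^ 2) ^ (a - 1 / 2)) := by
  have hα : 0 ≤ 3 / 2 - a := by linarith
  have hβ : 0 ≤ a - 1 / 2 := by linarith
  have hweight : ENNReal.ofReal (s ^ a) ≤ ENNReal.ofReal (T ^ (a - 1 / 2)) *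
      ENNReal.ofReal (s ^ (1 - a)) ^ (3 / 2 - a) * ENNReal.ofReal (s ^ (2 - a)) ^ (a - 1 / 2) := by
    convert ENNReal.ofReal_rpow_add_le hs hsT hβ hα hβ using 3
    ring
  have hnorm : eLpNorm f (ENNReal.ofReal r) μ ^ 2 ≤
      (eLpNorm f 2 μ ^ 2) ^ (3 / 2 - a) * (eLpNorm f 6 μ ^ 2) ^ (a - 1 / 2) := by
    rw [← ENNReal.rpow_mul_rpow_pow]
    gcongr
    simpa using eLpNorm_ofReal_le_eLpNorm_rpow_mul_eLpNorm_rpow hf (p := 2) (q := 6)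
      two_pos (by norm_num) hα hβ (by ring) (by rw [hr]; ring)
  calc _ ≤ _ := mul_le_mul' hweight hnorm
    _ = _ := by
      rw [ENNReal.mul_rpow_of_nonneg _ _ hα, ENNReal.mul_rpow_of_nonneg _ _ hβ]
      ring

theorem weighted_interpolation_inequality_general
    {X : Type*} [MeasurableSpace X] (m : Measure X)
    {E : Type*} [NormedAddCommGroup E]
    (a r : ℝ) (ha1 : 1/2 ≤ a) (ha2 : a ≤ 1) (hr : 1 / r = 2/3 - a/3)
    (T : ℝ) (u : ℝ → X → E)
    (humeas : ∀ s ∈ Set.Ioo (0:ℝ) T, AEStronglyMeasurable (u s) m)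
    (h2meas : AEMeasurable (fun s => eLpNorm (u s) 2 m) (volume.restrict (Set.Ioo 0 T)))
    (h6meas : AEMeasurable (fun s => eLpNorm (u s) 6 m) (volume.restrict (Set.Ioo 0 T))) :
    ∫⁻ s in Set.Ioo (0:ℝ) T,
        ENNReal.ofReal (s ^ a) * eLpNorm (u s) (ENNReal.ofReal r) m ^ 2 ≤
      ENNReal.ofReal (T ^ (a - 1/2)) *
        (∫⁻ s in Set.Ioo (0:ℝ) T,
            ENNReal.ofReal (s ^ (1 - a)) * eLpNorm (u s) 2 m ^ 2) ^ (3/2 - a) *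
        (∫⁻ s in Set.Ioo (0:ℝ) T,
            ENNReal.ofReal (s ^ (2 - a)) * eLpNorm (u s) 6 m ^ 2) ^ (a - 1/2) := by
  have hF : AEMeasurable (fun s : ℝ => ENNReal.ofReal (s ^ (1 - a)) * eLpNorm (u s) 2 m ^ 2)
      (volume.restrict (Set.Ioo 0 T)) := by fun_prop
  have hG : AEMeasurable (fun s : ℝ => ENNReal.ofReal (s ^ (2 - a)) * eLpNorm (u s) 6 m ^ 2)
      (volume.restrict (Set.Ioo 0 T)) := by fun_prop
  calc _ ≤ ∫⁻ s in Set.Ioo (0:ℝ) T, ENNReal.ofReal (T ^ (a - 1/2)) *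
          ((ENNReal.ofReal (s ^ (1 - a)) * eLpNorm (u s) 2 m ^ 2) ^ (3/2 - a) *
            (ENNReal.ofReal (s ^ (2 - a)) * eLpNorm (u s) 6 m ^ 2) ^ (a - 1/2)) :=
        setLIntegral_mono' measurableSet_Ioo fun s hs =>
          ofReal_rpow_mul_eLpNorm_sq_le (humeas s hs) ha1 (by linarith) hr hs.1 hs.2.le
    _ = _ := lintegral_const_mul' _ _ ENNReal.ofReal_ne_top
    _ ≤ _ := by
        gcongr
        exact ENNReal.lintegral_mul_norm_pow_le hF hG (by linarith) (by linarith) (by ring)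
    _ = _ := (mul_assoc _ _ _).symm

/-- Lemma 8.14 (time-weighted interpolation): for `1/2 ≤ a ≤ 1`, `1/r_a = 2/3 - a/3`, a
measure space `(X, m)`, `0 < T < ∞` and a measurable family `u(s)` of measurable functions
on `X`,
`∫₀ᵀ s^a ‖u(s)‖_{r_a}² ds ≤ T^{a-1/2} (∫₀ᵀ s^{1-a} ‖u(s)‖₂² ds)^{3/2-a}
  (∫₀ᵀ s^{2-a} ‖u(s)‖₆² ds)^{a-1/2}`, all integrals interpreted in `[0,∞]`. -/
theorem weighted_interpolation_inequality
    {X : Type*} [MeasurableSpace X] (m : Measure X)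
    {E : Type*} [NormedAddCommGroup E]
    (a r : ℝ) (ha1 : 1/2 ≤ a) (ha2 : a ≤ 1) (hr : 1 / r = 2/3 - a/3)
    (T : ℝ) (hT : 0 < T) (u : ℝ → X → E)
    (humeas : ∀ s ∈ Set.Ioo (0:ℝ) T, AEStronglyMeasurable (u s) m)
    (h2meas : AEMeasurable (fun s => eLpNorm (u s) 2 m) (volume.restrict (Set.Ioo 0 T)))
    (h6meas : AEMeasurable (fun s => eLpNorm (u s) 6 m) (volume.restrict (Set.Ioo 0 T))) :
    ∫⁻ s in Set.Ioo (0:ℝ) T,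
        ENNReal.ofReal (s ^ a) * eLpNorm (u s) (ENNReal.ofReal r) m ^ 2 ≤
      ENNReal.ofReal (T ^ (a - 1/2)) *
        (∫⁻ s in Set.Ioo (0:ℝ) T,
            ENNReal.ofReal (s ^ (1 - a)) * eLpNorm (u s) 2 m ^ 2) ^ (3/2 - a) *
        (∫⁻ s in Set.Ioo (0:ℝ) T,
            ENNReal.ofReal (s ^ (2 - a)) * eLpNorm (u s) 6 m ^ 2) ^ (a - 1/2) :=
  weighted_interpolation_inequality_general m a r ha1 ha2 hr T u humeas h2meas h6meas
end

section
/- Let 0 < T < ∞. Suppose g : (0,T] → [0,∞) is bounded and measurable, w : (0,T] → [0,∞) is non-decreasing, and g(t) ≤ w(t) ( (1/t) ∫₀ᵗ g(s)² ds )^{1/2} for every t ∈ (0,T]. Then g(t) = 0 for every t ∈ (0,T] with w(t) < 1. In particular, if w(t) ≤ 1/2 for 0 < t ≤ t₀ then g ≡ 0 on (0,t₀]. -/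
open MeasureTheory Set Filter

/-! Bounding `g ≤ K` on `(0, t]` bounds the root mean square `((1/t) ∫₀ᵗ g²)^{1/2}` by `K`, so the
hypothesis turns `g ≤ C wⁿ` (with `w` non-decreasing) into `g ≤ C wⁿ⁺¹`. Starting from the bound
`g ≤ C`, induction gives `g(t) ≤ C w(t)ⁿ` for every `n`, which forces `g(t) = 0` when `w(t) < 1`. -/

lemma sqrt_mean_sq_Ioc_le {f : ℝ → ℝ} {t K : ℝ} (ht : 0 < t) (hK : 0 ≤ K)
    (hf : ∀ s ∈ Ioc 0 t, |f s| ≤ K) :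
    √((1 / t) * ∫ s in Ioc 0 t, f s ^ 2) ≤ K := by
  have hsq : ∀ s ∈ Ioc 0 t, ‖f s ^ 2‖ ≤ K ^ 2 := fun s hs => by
    rw [Real.norm_eq_abs, abs_pow]
    exact pow_le_pow_left₀ (abs_nonneg _) (hf s hs) 2
  -- No integrability is needed: a non-integrable function has integral `0`.
  have hint : ∫ s in Ioc 0 t, f s ^ 2 ≤ K ^ 2 * t := by
    calc ∫ s in Ioc 0 t, f s ^ 2 ≤ ‖∫ s in Ioc 0 t, f s ^ 2‖ := le_abs_self _
      _ ≤ K ^ 2 * volume.real (Ioc 0 t) :=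
          norm_setIntegral_le_of_norm_le_const measure_Ioc_lt_top hsq
      _ = K ^ 2 * t := by rw [Real.volume_real_Ioc_of_le ht.le, sub_zero]
  have hmean : (1 / t) * ∫ s in Ioc 0 t, f s ^ 2 ≤ K ^ 2 := by
    rw [one_div_mul_eq_div, div_le_iff₀ ht]
    exact hint
  exact Real.sqrt_le_iff.mpr ⟨hK, hmean⟩

lemma le_mul_pow_of_le_mul_sqrt_mean_sq {T C : ℝ} {g w : ℝ → ℝ}
    (hg0 : ∀ t ∈ Ioc 0 T, 0 ≤ g t) (hgC : ∀ t ∈ Ioc 0 T, g t ≤ C)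
    (hw0 : ∀ t ∈ Ioc 0 T, 0 ≤ w t)
    (hwmono : ∀ s ∈ Ioc 0 T, ∀ t ∈ Ioc 0 T, s ≤ t → w s ≤ w t)
    (hiter : ∀ t ∈ Ioc 0 T, g t ≤ w t * √((1 / t) * ∫ s in Ioc 0 t, g s ^ 2))
    (n : ℕ) : ∀ t ∈ Ioc 0 T, g t ≤ C * w t ^ n := by
  induction n with
  | zero => simpa using hgC
  | succ n ih =>
    intro t ht
    have hprev : ∀ s ∈ Ioc 0 t, |g s| ≤ C * w t ^ n := fun s hs => by
      have hsT : s ∈ Ioc 0 T := ⟨hs.1, hs.2.trans ht.2⟩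
      rw [abs_of_nonneg (hg0 s hsT)]
      calc g s ≤ C * w s ^ n := ih s hsT
        _ ≤ C * w t ^ n := by
          have hC : 0 ≤ C := (hg0 s hsT).trans (hgC s hsT)
          gcongr
          exacts [hw0 s hsT, hwmono s hsT t ht hs.2]
    have hrms := sqrt_mean_sq_Ioc_le ht.1 ((hg0 t ht).trans (ih t ht)) hprev
    calc g t ≤ w t * √((1 / t) * ∫ s in Ioc 0 t, g s ^ 2) := hiter t ht
      _ ≤ w t * (C * w t ^ n) := mul_le_mul_of_nonneg_left hrms (hw0 t ht)
      _ = C * w t ^ (n + 1) := by ring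

lemma nonpos_of_forall_le_mul_pow {x C r : ℝ} (hr0 : 0 ≤ r) (hr1 : r < 1)
    (h : ∀ n : ℕ, x ≤ C * r ^ n) : x ≤ 0 := by
  have hlim : Tendsto (fun n : ℕ => C * r ^ n) atTop (nhds 0) := by
    simpa using (tendsto_pow_atTop_nhds_zero_of_lt_one hr0 hr1).const_mul C
  exact ge_of_tendsto' hlim h

theorem uniqueness_iteration_lemma_general
    (T : ℝ) (g w : ℝ → ℝ)
    (hg0 : ∀ t ∈ Set.Ioc (0:ℝ) T, 0 ≤ g t)
    (hgbdd : ∃ C : ℝ, ∀ t ∈ Set.Ioc (0:ℝ) T, g t ≤ C)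
    (hw0 : ∀ t ∈ Set.Ioc (0:ℝ) T, 0 ≤ w t)
    (hwmono : ∀ s ∈ Set.Ioc (0:ℝ) T, ∀ t ∈ Set.Ioc (0:ℝ) T, s ≤ t → w s ≤ w t)
    (hiter : ∀ t ∈ Set.Ioc (0:ℝ) T,
      g t ≤ w t * Real.sqrt ((1 / t) * ∫ s in Set.Ioc (0:ℝ) t, g s ^ 2)) :
    (∀ t ∈ Set.Ioc (0:ℝ) T, w t < 1 → g t = 0)
    ∧ (∀ t₀ : ℝ, 0 < t₀ → t₀ ≤ T → (∀ t ∈ Set.Ioc (0:ℝ) t₀, w t ≤ 1/2) →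
        ∀ t ∈ Set.Ioc (0:ℝ) t₀, g t = 0) := by
  obtain ⟨C, hgC⟩ := hgbdd
  have hvanish : ∀ t ∈ Ioc 0 T, w t < 1 → g t = 0 := fun t ht hwt =>
    le_antisymm
      (nonpos_of_forall_le_mul_pow (hw0 t ht) hwt fun n =>
        le_mul_pow_of_le_mul_sqrt_mean_sq hg0 hgC hw0 hwmono hiter n t ht)
      (hg0 t ht)
  refine ⟨hvanish, fun t₀ _ ht₀T hw t ht => ?_⟩
  exact hvanish t ⟨ht.1, ht.2.trans ht₀T⟩ ((hw t ht).trans_lt (by norm_num))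

/-- The iteration lemma at the core of the uniqueness theorem (Theorem 9.3): if
`g : (0,T] → [0,∞)` is bounded and measurable, `w : (0,T] → [0,∞)` is non-decreasing, and
`g(t) ≤ w(t) ((1/t) ∫₀ᵗ g(s)² ds)^{1/2}` for all `t ∈ (0,T]`, then `g(t) = 0` whenever
`w(t) < 1`; in particular if `w ≤ 1/2` on `(0,t₀]` then `g ≡ 0` on `(0,t₀]`. -/
theorem uniqueness_iteration_lemma
    (T : ℝ) (hT : 0 < T) (g w : ℝ → ℝ)
    (hgmeas : AEMeasurable g (volume.restrict (Set.Ioc 0 T)))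
    (hg0 : ∀ t ∈ Set.Ioc (0:ℝ) T, 0 ≤ g t)
    (hgbdd : ∃ C : ℝ, ∀ t ∈ Set.Ioc (0:ℝ) T, g t ≤ C)
    (hw0 : ∀ t ∈ Set.Ioc (0:ℝ) T, 0 ≤ w t)
    (hwmono : ∀ s ∈ Set.Ioc (0:ℝ) T, ∀ t ∈ Set.Ioc (0:ℝ) T, s ≤ t → w s ≤ w t)
    (hiter : ∀ t ∈ Set.Ioc (0:ℝ) T,
      g t ≤ w t * Real.sqrt ((1 / t) * ∫ s in Set.Ioc (0:ℝ) t, g s ^ 2)) :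
    (∀ t ∈ Set.Ioc (0:ℝ) T, w t < 1 → g t = 0)
    ∧ (∀ t₀ : ℝ, 0 < t₀ → t₀ ≤ T → (∀ t ∈ Set.Ioc (0:ℝ) t₀, w t ≤ 1/2) →
        ∀ t ∈ Set.Ioc (0:ℝ) t₀, g t = 0) :=
  uniqueness_iteration_lemma_general T g w hg0 hgbdd hw0 hwmono hiter
end
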